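/- arXiv:1609.01339 — 8 statements merged into one kernel-verified Lean document; each statement's English description precedes it below -/
import Mathlib

section
/- For every F ∈ SL(2) there exist Q₁, Q₂ ∈ O(2) such that F = Q₁ K Q₂, where K is the simple shear matrix with rows (1, γ) and (0, 1) and γ = √(‖F‖² − 2). (In particular every area-preserving planar deformation gradient is a simple shear composed with orthogonal transformations.) -/
/-! `FᵀF` and `KᵀK` are symmetric with determinant `1` and the same trace `‖F‖²`, so an
orthogonal `Q₂` conjugates one into the other. Then `F Q₂ᵀ` and `K` have the same Gram matrix,
so `Q₁ := F Q₂ᵀ K⁻¹` is orthogonal and `F = Q₁ K Q₂`. -/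

open Matrix

lemma two_mul_det_le_trace_transpose_mul_self (F : Matrix (Fin 2) (Fin 2) ℝ) :
    2 * F.det ≤ (Fᵀ * F).trace := by
  simp only [det_fin_two, trace_fin_two, mul_apply, Fin.sum_univ_two, transpose_apply]
  nlinarith [sq_nonneg (F 0 0 - F 1 1), sq_nonneg (F 0 1 + F 1 0)]

lemma exists_orthogonal_mul_eq_of_transpose_mul_self_eq {n R : Type*} [Fintype n]
    [DecidableEq n] [CommRing R] {F G : Matrix n n R} (hG : IsUnit G.det)
    (h : Fᵀ * F = Gᵀ * G) : ∃ Q : Matrix n n R, Qᵀ * Q = 1 ∧ F = Q * G := by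
  refine ⟨F * G⁻¹, ?_, by rw [Matrix.mul_assoc, nonsing_inv_mul _ hG, Matrix.mul_one]⟩
  calc (F * G⁻¹)ᵀ * (F * G⁻¹) = (G⁻¹)ᵀ * (Fᵀ * F) * G⁻¹ := by
        simp only [transpose_mul, Matrix.mul_assoc]
    _ = (G * G⁻¹)ᵀ * (G * G⁻¹) := by
        simp only [h, transpose_mul, Matrix.mul_assoc]
    _ = 1 := by simp [mul_nonsing_inv _ hG]

lemma exists_orthogonal_conj_eq_of_conj_eq_smul {n : Type*} [Fintype n] [DecidableEq n]
    {P S T : Matrix n n ℝ} {t : ℝ} (ht : 0 < t) (hP : Pᵀ * P = t • 1)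
    (hPS : P * S * Pᵀ = t • T) : ∃ Q : Matrix n n ℝ, Qᵀ * Q = 1 ∧ Q * S * Qᵀ = T := by
  have hc : (√t)⁻¹ * ((√t)⁻¹ * t) = 1 := by
    rw [← mul_assoc, ← mul_inv, Real.mul_self_sqrt ht.le, inv_mul_cancel₀ ht.ne']
  refine ⟨(√t)⁻¹ • P, ?_, ?_⟩
  · simp only [transpose_smul, Matrix.smul_mul, Matrix.mul_smul, hP, smul_smul, hc, one_smul]
  · simp only [transpose_smul, Matrix.smul_mul, Matrix.mul_smul, hPS, smul_smul, hc, one_smul]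

-- With `v = (γ - b, a - 1)`, the reflection `P` with rows `v`, `v⊥` gives `P S Pᵀ = ‖v‖² • KᵀK`,
-- and `v = 0` only when `S = KᵀK` already.
lemma exists_orthogonal_conj_eq_transpose_shear_mul_shear {S : Matrix (Fin 2) (Fin 2) ℝ}
    (hS : S.IsSymm) (hdet : S.det = 1) {γ : ℝ} (htr : S.trace = 2 + γ ^ 2) :
    ∃ Q : Matrix (Fin 2) (Fin 2) ℝ, Qᵀ * Q = 1 ∧
      Q * S * Qᵀ = !![1, γ; 0, 1]ᵀ * !![1, γ; 0, 1] := by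
  obtain ⟨a, b, d, rfl⟩ : ∃ a b d, S = !![a, b; b, d] :=
    ⟨S 0 0, S 0 1, S 1 1, (eta_fin_two S).trans (by rw [hS.apply 0 1])⟩
  replace hdet : a * d - b ^ 2 = 1 := by simpa [det_fin_two, sq] using hdet
  have hγ : γ ^ 2 = a + d - 2 := by
    simp only [trace_fin_two, of_apply, cons_val', cons_val_zero, cons_val_one] at htr
    linarith
  rcases (add_nonneg (sq_nonneg (γ - b)) (sq_nonneg (a - 1))).eq_or_lt with hzero | hpos
  · have hb : b = γ := by nlinarith [sq_nonneg (γ - b), sq_nonneg (a - 1)]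
    have ha : a = 1 := by nlinarith [sq_nonneg (γ - b), sq_nonneg (a - 1)]
    refine ⟨1, by simp, ?_⟩
    ext i j
    fin_cases i <;> fin_cases j <;> simp [mul_apply, Fin.sum_univ_two] <;> linarith
  · refine exists_orthogonal_conj_eq_of_conj_eq_smul hpos
      (P := !![γ - b, a - 1; a - 1, b - γ]) ?_ ?_
    · ext i j
      fin_cases i <;> fin_cases j <;> simp [mul_apply, Fin.sum_univ_two] <;> ring
    · ext i j
      fin_cases i <;> fin_cases j <;> simp [mul_apply, Fin.sum_univ_two]
      · linear_combination (a - 1) * hγ + (a - 1) * hdet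
      · linear_combination ((γ - b) * (a - 1) - a * (γ - b)) * hγ - (γ - b) * hdet
      · linear_combination ((γ - b) * (a - 1) - a * (γ - b)) * hγ - (γ - b) * hdet
      · linear_combination (-((γ - b) ^ 2 + (a - 1) ^ 2) - (a - 1)) * hγ - (a - 1) * hdet

/-- Every `F ∈ SL(2)` can be written as `F = Q₁ K Q₂` with
`Q₁, Q₂ ∈ O(2)` and `K` the simple shear matrix with rows `(1, γ)`, `(0, 1)`,
where `γ = √(‖F‖² − 2)` and `‖F‖² = tr(FᵀF)` is the squared Frobenius norm. -/
theorem sl2_eq_orthogonal_shear_orthogonal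
    (F : Matrix (Fin 2) (Fin 2) ℝ) (hF : F.det = 1) :
    ∃ Q₁ Q₂ : Matrix (Fin 2) (Fin 2) ℝ,
      Q₁ᵀ * Q₁ = 1 ∧ Q₂ᵀ * Q₂ = 1 ∧
      F = Q₁ * !![1, Real.sqrt ((Fᵀ * F).trace - 2); 0, 1] * Q₂ := by
  set γ := Real.sqrt ((Fᵀ * F).trace - 2)
  have hγ : (Fᵀ * F).trace = 2 + γ ^ 2 := by
    rw [Real.sq_sqrt (by linarith [two_mul_det_le_trace_transpose_mul_self F])]
    ring
  obtain ⟨Q₂, hQ₂, hFQ₂⟩ := exists_orthogonal_conj_eq_transpose_shear_mul_shear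
    (isSymm_transpose_mul_self F) (by simp [hF]) hγ
  obtain ⟨Q₁, hQ₁, hFQ₁⟩ := exists_orthogonal_mul_eq_of_transpose_mul_self_eq
    (F := F * Q₂ᵀ) (G := !![1, γ; 0, 1]) (by simp [det_fin_two])
    (by rw [← hFQ₂]; simp only [transpose_mul, transpose_transpose, Matrix.mul_assoc])
  refine ⟨Q₁, Q₂, hQ₁, hQ₂, ?_⟩
  rw [← hFQ₁, Matrix.mul_assoc, hQ₂, Matrix.mul_one]
end

section
/- Let W : SL(2) → ℝ be objective and isotropic, let φ : [0,∞) → ℝ be the unique function with W(F) = φ(λmax(F) − 1/λmax(F)) for all F ∈ SL(2), and let φ̃ : ℝ → ℝ, φ̃(γ) = W(K(γ)), where K(γ) is the matrix with rows (1, γ) and (0, 1). Then φ̃(γ) = φ(γ) for all γ ≥ 0 and φ̃(−γ) = φ̃(γ) for all γ ∈ ℝ; moreover, if φ̃ is convex on ℝ, then φ is nondecreasing and convex on [0,∞). -/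
/-!
For `F ∈ SL(2)` with largest singular value `λ`, the squared singular values `λ²` and `λ⁻²` sum
to `tr (FᵀF)`, so `(λ - 1/λ)² = tr (FᵀF) - 2`. For the shear `K(γ)` this trace is `γ² + 2`, hence
`W (K γ) = φ |γ|`. An even convex function on `ℝ` is nondecreasing on `[0, ∞)`, because `x`
lies between `-y` and `y` whenever `0 ≤ x ≤ y`.
-/

open Matrix

/-- The largest singular value of a real 2×2 matrix `F`, i.e. the square root of
the largest eigenvalue of `FᵀF`. -/
noncomputable def lambdaMax (F : Matrix (Fin 2) (Fin 2) ℝ) : ℝ :=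
  Real.sqrt (((Fᵀ * F).trace + Real.sqrt ((Fᵀ * F).trace ^ 2 - 4 * (Fᵀ * F).det)) / 2)

open Set

theorem ConvexOn.monotoneOn_Ici_of_even {𝕜 β : Type*} [Field 𝕜] [LinearOrder 𝕜]
    [IsStrictOrderedRing 𝕜] [AddCommMonoid β] [LinearOrder β] [IsOrderedAddMonoid β]
    [Module 𝕜 β] [PosSMulStrictMono 𝕜 β] {f : 𝕜 → β} (hf : ConvexOn 𝕜 univ f)
    (heven : ∀ x, f (-x) = f x) : MonotoneOn f (Ici 0) := by
  intro x (hx : 0 ≤ x) y _ hxy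
  have hseg : x ∈ segment 𝕜 (-y) y := by
    rw [segment_eq_Icc (by linarith)]
    exact ⟨by linarith, hxy⟩
  simpa [heven y] using hf.le_on_segment (mem_univ (-y)) (mem_univ y) hseg

theorem Real.sqrt_half_add_sqrt_sq_sub_four_sub_one_div {t : ℝ} (ht : 2 ≤ t) :
    √((t + √(t ^ 2 - 4)) / 2) - 1 / √((t + √(t ^ 2 - 4)) / 2) = √(t - 2) := by
  set s := √(t ^ 2 - 4)
  have hs_sq : s ^ 2 = t ^ 2 - 4 := Real.sq_sqrt (by nlinarith)
  have hs_nonneg : 0 ≤ s := Real.sqrt_nonneg _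
  set l := √((t + s) / 2)
  have hl_sq : l ^ 2 = (t + s) / 2 := Real.sq_sqrt (by positivity)
  have hl_pos : 0 < l := Real.sqrt_pos.mpr (by positivity)
  have hl_one : 1 ≤ l := by nlinarith
  have hl_inv_le : 1 / l ≤ l := (div_le_one_of_le₀ hl_one hl_pos.le).trans hl_one
  have hl_inv_sq : (1 / l) ^ 2 = (t - s) / 2 := by
    rw [one_div, inv_pow, hl_sq]
    field_simp
    nlinarith
  have hl_mul_inv : l * (1 / l) = 1 := by field_simp
  symm
  rw [Real.sqrt_eq_iff_eq_sq (by linarith) (sub_nonneg.mpr hl_inv_le), sub_sq, mul_assoc,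
    hl_mul_inv, hl_sq, hl_inv_sq]
  ring

theorem trace_transpose_mul_self_fin_two {R : Type*} [CommRing R] (F : Matrix (Fin 2) (Fin 2) R) :
    (Fᵀ * F).trace = F 0 0 ^ 2 + F 0 1 ^ 2 + F 1 0 ^ 2 + F 1 1 ^ 2 := by
  simp only [trace_fin_two, mul_apply, Fin.sum_univ_two, transpose_apply]
  ring

theorem two_le_trace_transpose_mul_self {R : Type*} [CommRing R] [LinearOrder R]
    [IsStrictOrderedRing R] {F : Matrix (Fin 2) (Fin 2) R} (hF : F.det = 1) :
    2 ≤ (Fᵀ * F).trace := by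
  rw [det_fin_two] at hF
  rw [trace_transpose_mul_self_fin_two]
  nlinarith [sq_nonneg (F 0 0 - F 1 1), sq_nonneg (F 0 1 + F 1 0)]

theorem lambdaMax_sub_one_div_of_det_eq_one {F : Matrix (Fin 2) (Fin 2) ℝ} (hF : F.det = 1) :
    lambdaMax F - 1 / lambdaMax F = √((Fᵀ * F).trace - 2) := by
  have hdet : (Fᵀ * F).det = 1 := by rw [det_mul, det_transpose, hF, one_mul]
  rw [lambdaMax, hdet, mul_one]
  exact Real.sqrt_half_add_sqrt_sq_sub_four_sub_one_div (two_le_trace_transpose_mul_self hF)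

theorem shear_det (γ : ℝ) : !![1, γ; 0, 1].det = 1 := by
  simp [det_fin_two_of]

theorem shear_lambdaMax_sub_one_div (γ : ℝ) :
    lambdaMax !![1, γ; 0, 1] - 1 / lambdaMax !![1, γ; 0, 1] = |γ| := by
  have htrace : (!![1, γ; 0, 1]ᵀ * !![1, γ; 0, 1]).trace = γ ^ 2 + 2 := by
    rw [trace_transpose_mul_self_fin_two]
    simp only [of_apply, cons_val', cons_val_zero, cons_val_one, empty_val', cons_val_fin_one]
    ring
  rw [lambdaMax_sub_one_div_of_det_eq_one (shear_det γ), htrace, add_sub_cancel_right,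
    Real.sqrt_sq_eq_abs]

theorem shear_representation_even_and_convexity_general
    (W : Matrix (Fin 2) (Fin 2) ℝ → ℝ)
    (φ : ℝ → ℝ)
    (hφ : ∀ F : Matrix (Fin 2) (Fin 2) ℝ, F.det = 1 →
      W F = φ (lambdaMax F - 1 / lambdaMax F)) :
    (∀ γ : ℝ, 0 ≤ γ → W !![1, γ; 0, 1] = φ γ) ∧
    (∀ γ : ℝ, W !![1, -γ; 0, 1] = W !![1, γ; 0, 1]) ∧
    (ConvexOn ℝ Set.univ (fun γ : ℝ => W !![1, γ; 0, 1]) →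
      MonotoneOn φ (Set.Ici 0) ∧ ConvexOn ℝ (Set.Ici 0) φ) := by
  have hshear (γ : ℝ) : W !![1, γ; 0, 1] = φ |γ| := by
    rw [hφ _ (shear_det γ), shear_lambdaMax_sub_one_div]
  have hEqOn : EqOn (fun γ : ℝ => W !![1, γ; 0, 1]) φ (Ici 0) := fun γ hγ =>
    (hshear γ).trans (congrArg φ (abs_of_nonneg hγ))
  have heven (γ : ℝ) : W !![1, -γ; 0, 1] = W !![1, γ; 0, 1] := by
    rw [hshear, hshear γ, abs_neg]
  refine ⟨fun γ hγ => hEqOn hγ, heven, fun hconv => ⟨?_, ?_⟩⟩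
  · exact (hconv.monotoneOn_Ici_of_even heven).congr hEqOn
  · exact (hconv.subset (subset_univ _) (convex_Ici 0)).congr hEqOn

/-- For `W : SL(2) → ℝ` objective and isotropic, with
`φ` the representing function `W(F) = φ(λmax(F) − 1/λmax(F))` and
`φ̃(γ) = W(K(γ))` (`K(γ)` the simple shear with rows `(1, γ)`, `(0, 1)`):
`φ̃ = φ` on `[0,∞)`, `φ̃` is even, and if `φ̃` is convex on `ℝ`, then `φ` is
nondecreasing and convex on `[0,∞)`. -/
theorem shear_representation_even_and_convexity
    (W : Matrix (Fin 2) (Fin 2) ℝ → ℝ)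
    (hW : ∀ F : Matrix (Fin 2) (Fin 2) ℝ, F.det = 1 →
      ∀ Q₁ Q₂ : Matrix (Fin 2) (Fin 2) ℝ, Q₁ᵀ * Q₁ = 1 → Q₂ᵀ * Q₂ = 1 →
        W (Q₁ * F * Q₂) = W F)
    (φ : ℝ → ℝ)
    (hφ : ∀ F : Matrix (Fin 2) (Fin 2) ℝ, F.det = 1 →
      W F = φ (lambdaMax F - 1 / lambdaMax F)) :
    (∀ γ : ℝ, 0 ≤ γ → W !![1, γ; 0, 1] = φ γ) ∧
    (∀ γ : ℝ, W !![1, -γ; 0, 1] = W !![1, γ; 0, 1]) ∧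
    (ConvexOn ℝ Set.univ (fun γ : ℝ => W !![1, γ; 0, 1]) →
      MonotoneOn φ (Set.Ici 0) ∧ ConvexOn ℝ (Set.Ici 0) φ) :=
  shear_representation_even_and_convexity_general W φ hφ
end

section
/- Let W : SL(2) → ℝ be objective and isotropic. Then the following are equivalent: (i) W is rank-one convex; (ii) W is polyconvex; (iii) the map φ̃ : ℝ → ℝ, φ̃(γ) = W(K(γ)), where K(γ) has rows (1, γ) and (0, 1), is convex on ℝ; (iv) the unique function φ : [0,∞) → ℝ with W(F) = φ(λmax(F) − 1/λmax(F)) for all F ∈ SL(2) is nondecreasing and convex on [0,∞). -/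
open Matrix

/-- Rank-one convexity on `SL(2)`: for every `F` with `det F = 1` and all
`ξ, η ∈ ℝ²` with `⟨F⁻ᵀ, ξηᵀ⟩ = 0`, the map `t ↦ W(F + t·ξηᵀ)` is convex. -/
def RankOneConvexSL (W : Matrix (Fin 2) (Fin 2) ℝ → ℝ) : Prop :=
  ∀ F : Matrix (Fin 2) (Fin 2) ℝ, F.det = 1 →
    ∀ ξ η : Fin 2 → ℝ, ((vecMulVec ξ η)ᵀ * F⁻¹ᵀ).trace = 0 →
      ConvexOn ℝ Set.univ (fun t : ℝ => W (F + t • vecMulVec ξ η))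

/-- Convexity for extended-real-valued functions on `ℝ^{2×2} × ℝ`. -/
def ConvexEReal (P : Matrix (Fin 2) (Fin 2) ℝ × ℝ → EReal) : Prop :=
  ∀ x y : Matrix (Fin 2) (Fin 2) ℝ × ℝ, ∀ a b : ℝ, 0 ≤ a → 0 ≤ b → a + b = 1 →
    P (a • x + b • y) ≤ (a : EReal) * P x + (b : EReal) * P y

/-- Polyconvexity on `SL(2)` in the sense of Mielke: the extension of `W` by
`+∞` outside `SL(2)` is a convex function of `(F, det F)`. -/
def PolyconvexSL (W : Matrix (Fin 2) (Fin 2) ℝ → ℝ) : Prop :=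
  ∃ P : Matrix (Fin 2) (Fin 2) ℝ × ℝ → EReal, ConvexEReal P ∧
    ∀ F : Matrix (Fin 2) (Fin 2) ℝ,
      (if F.det = 1 then (W F : EReal) else ⊤) = P (F, F.det)

/-!
Identify `ℝ²` with `ℂ` and write `F z = a z + b z̄`. Then `det F = |a|² - |b|²` and the singular
values of `F` are `|a| ± |b|`, so on `SL(2)` we get `λmax - 1/λmax = 2|b|`, the norm of a linear
function of `F`. If `φ` is nondecreasing and convex on `[0, ∞)`, then `W = φ(2|b|)` is the
restriction to `SL(2)` of a convex function of `F` alone. This gives polyconvexity, and also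
rank-one convexity, since by the matrix determinant lemma the admissible rank-one lines stay in
`SL(2)`. Conversely, rank-one convexity and polyconvexity each make `W` convex along the shear
line `γ ↦ K(γ)`, and `W (K γ) = φ |γ|`. An even convex function of `γ` is nondecreasing and
convex on `[0, ∞)`.
-/

open Set

theorem Matrix.det_add_smul_vecMulVec_of_trace_eq_zero {n R : Type*} [Fintype n] [DecidableEq n]
    [CommRing R] {F : Matrix n n R} (hF : IsUnit F.det) {ξ η : n → R}
    (h : ((vecMulVec ξ η)ᵀ * F⁻¹ᵀ).trace = 0) (t : R) :
    (F + t • vecMulVec ξ η).det = F.det := by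
  have hη : η ⬝ᵥ (F⁻¹ *ᵥ ξ) = 0 := by
    rwa [← transpose_mul, trace_transpose, mul_vecMulVec, trace_vecMulVec, dotProduct_comm] at h
  rw [← smul_vecMulVec, vecMulVec_eq Unit, det_add_mul _ _ hF, det_unique (1 + _),
    Matrix.mul_assoc, replicateCol_smul, Matrix.mul_smul, ← replicateCol_mulVec]
  simp [hη]

theorem sqrt_half_add_sqrt_sub_one_div {T : ℝ} (hT : 2 ≤ T) :
    √((T + √(T ^ 2 - 4)) / 2) - 1 / √((T + √(T ^ 2 - 4)) / 2) = √(T - 2) := by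
  set s := √(T ^ 2 - 4)
  set l := √((T + s) / 2)
  have hs : s ^ 2 = T ^ 2 - 4 := Real.sq_sqrt (by nlinarith)
  have hs0 : 0 ≤ s := Real.sqrt_nonneg _
  have hl2 : l ^ 2 = (T + s) / 2 := Real.sq_sqrt (by positivity)
  have hl0 : 0 < l := Real.sqrt_pos.mpr (by positivity)
  have hl1 : 1 ≤ l := by nlinarith
  have hsq : (l - 1 / l) ^ 2 = T - 2 := by
    -- `1 / l² = (T - s) / 2`, so `l² + 1 / l² = T`
    have : l ^ 2 * (T - s) = 2 := by rw [hl2]; nlinarith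
    field_simp
    nlinarith
  rw [← hsq, Real.sqrt_sq (by rw [sub_nonneg, div_le_iff₀ hl0]; nlinarith)]

/-- `2 b`, where `F z = a z + b z̄` on `ℂ ≅ ℝ²`. -/
def anticonformalCoeff : Matrix (Fin 2) (Fin 2) ℝ →ₗ[ℝ] ℂ where
  toFun F := ⟨F 0 0 - F 1 1, F 0 1 + F 1 0⟩
  map_add' F G := by
    apply Complex.ext <;> simp only [Matrix.add_apply, Complex.add_re, Complex.add_im] <;> ring
  map_smul' c F := by
    apply Complex.ext <;>
      simp only [Matrix.smul_apply, smul_eq_mul, RingHom.id_apply, Complex.real_smul,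
        Complex.mul_re, Complex.mul_im, Complex.ofReal_re, Complex.ofReal_im] <;> ring

theorem norm_anticonformalCoeff_sq (F : Matrix (Fin 2) (Fin 2) ℝ) :
    ‖anticonformalCoeff F‖ ^ 2 = (Fᵀ * F).trace - 2 * F.det := by
  rw [Complex.sq_norm, Complex.normSq_apply, det_fin_two, trace_fin_two]
  simp only [anticonformalCoeff, LinearMap.coe_mk, AddHom.coe_mk, mul_apply, transpose_apply,
    Fin.sum_univ_two]
  ring

theorem lambdaMax_sub_one_div_eq_norm {F : Matrix (Fin 2) (Fin 2) ℝ} (hF : F.det = 1) :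
    lambdaMax F - 1 / lambdaMax F = ‖anticonformalCoeff F‖ := by
  have hT : (Fᵀ * F).trace - 2 = ‖anticonformalCoeff F‖ ^ 2 := by
    rw [norm_anticonformalCoeff_sq, hF, mul_one]
  have := sqrt_half_add_sqrt_sub_one_div (T := (Fᵀ * F).trace) (by nlinarith)
  rw [hT, Real.sqrt_sq (norm_nonneg _)] at this
  rwa [lambdaMax, det_mul, det_transpose, hF, mul_one, mul_one]

theorem MonotoneOn.convexOn_univ_comp_norm {E : Type*} [SeminormedAddCommGroup E]
    [NormedSpace ℝ E] {f : ℝ → ℝ} (hm : MonotoneOn f (Ici 0)) (hc : ConvexOn ℝ (Ici 0) f) :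
    ConvexOn ℝ univ (fun x : E => f ‖x‖) := by
  refine ⟨convex_univ, fun x _ y _ a b ha hb hab => ?_⟩
  calc f ‖a • x + b • y‖ ≤ f (a • ‖x‖ + b • ‖y‖) :=
        hm (norm_nonneg _) (by simp only [mem_Ici, smul_eq_mul]; positivity)
          ((convexOn_norm convex_univ).2 trivial trivial ha hb hab)
    _ ≤ a • f ‖x‖ + b • f ‖y‖ := hc.2 (norm_nonneg x) (norm_nonneg y) ha hb hab

theorem convexOn_univ_comp_abs_iff {f : ℝ → ℝ} :
    ConvexOn ℝ univ (fun x => f |x|) ↔ MonotoneOn f (Ici 0) ∧ ConvexOn ℝ (Ici 0) f := by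
  refine ⟨fun h => ⟨fun x hx y hy hxy => ?_, ?_⟩, fun ⟨hm, hc⟩ => hm.convexOn_univ_comp_norm hc⟩
  · have hseg : x ∈ segment ℝ (-y) y := by
      rw [segment_eq_Icc (by simp only [mem_Ici] at hy; linarith)]
      exact ⟨by simp only [mem_Ici] at hx hy; linarith, hxy⟩
    have := h.le_on_segment trivial trivial hseg
    rwa [abs_neg, max_self, abs_of_nonneg hx, abs_of_nonneg hy] at this
  · exact (h.subset (subset_univ _) (convex_Ici 0)).congr
      fun x hx => by simp only [abs_of_nonneg (show 0 ≤ x from hx)]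

theorem ConvexOn.comp_add_smul {E : Type*} [AddCommGroup E] [Module ℝ E] {ψ : E → ℝ}
    (hψ : ConvexOn ℝ univ ψ) (x v : E) : ConvexOn ℝ univ (fun t : ℝ => ψ (x + t • v)) := by
  have := hψ.comp_affineMap (AffineMap.lineMap x (x + v))
  rw [preimage_univ] at this
  refine this.congr fun t _ => ?_
  simp [AffineMap.lineMap_apply_module', add_comm]

open Classical in
noncomputable def extendTop {E : Type*} (s : Set E) (g : E → ℝ) (x : E) : EReal :=
  if x ∈ s then (g x : EReal) else ⊤

theorem ConvexOn.extendTop_le {E : Type*} [AddCommGroup E] [Module ℝ E] {s : Set E}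
    {g : E → ℝ} (hg : ConvexOn ℝ s g) (x y : E) {a b : ℝ} (ha : 0 ≤ a) (hb : 0 ≤ b)
    (hab : a + b = 1) :
    extendTop s g (a • x + b • y) ≤
      (a : EReal) * extendTop s g x + (b : EReal) * extendTop s g y := by
  rcases ha.eq_or_lt with rfl | ha0
  · obtain rfl : b = 1 := by linarith
    simp
  rcases hb.eq_or_lt with rfl | hb0
  · obtain rfl : a = 1 := by linarith
    simp
  have hne : ∀ {c : ℝ} (z : E), 0 < c → (c : EReal) * extendTop s g z ≠ ⊥ := by
    intro c z hc
    unfold extendTop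
    split_ifs
    · exact_mod_cast EReal.coe_ne_bot (c * g z)
    · simp [EReal.coe_mul_top_of_pos hc]
  have htop : ∀ {c : ℝ} {z : E}, 0 < c → z ∉ s → (c : EReal) * extendTop s g z = ⊤ := by
    intro c z hc hz
    simp [extendTop, hz, EReal.coe_mul_top_of_pos hc]
  by_cases hx : x ∈ s
  · by_cases hy : y ∈ s
    · simp only [extendTop, hx, hy, hg.1 hx hy ha hb hab, if_true]
      exact_mod_cast hg.2 hx hy ha hb hab
    · rw [htop hb0 hy, EReal.add_top_of_ne_bot (hne x ha0)]
      exact le_top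
  · rw [htop ha0 hx, EReal.top_add_of_ne_bot (hne y hb0)]
    exact le_top

theorem ConvexEReal.convexOn_of_affineMap {P : Matrix (Fin 2) (Fin 2) ℝ × ℝ → EReal}
    (hP : ConvexEReal P) (c : ℝ →ᵃ[ℝ] Matrix (Fin 2) (Fin 2) ℝ × ℝ) {f : ℝ → ℝ}
    (hf : ∀ t, P (c t) = f t) : ConvexOn ℝ univ f := by
  refine ⟨convex_univ, fun x _ y _ a b ha hb hab => ?_⟩
  have := hP (c x) (c y) a b ha hb hab
  rw [← Convex.combo_affine_apply hab, hf, hf, hf] at this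
  exact_mod_cast this

section SL2

def HasProfile (W : Matrix (Fin 2) (Fin 2) ℝ → ℝ) (φ : ℝ → ℝ) : Prop :=
  ∀ F : Matrix (Fin 2) (Fin 2) ℝ, F.det = 1 → W F = φ (lambdaMax F - 1 / lambdaMax F)

variable {W : Matrix (Fin 2) (Fin 2) ℝ → ℝ} {φ : ℝ → ℝ}

theorem det_shear (γ : ℝ) : (!![1, γ; 0, 1] : Matrix (Fin 2) (Fin 2) ℝ).det = 1 := by
  simp [det_fin_two_of]

theorem HasProfile.apply_eq (hφ : HasProfile W φ) {F : Matrix (Fin 2) (Fin 2) ℝ}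
    (hF : F.det = 1) : W F = φ ‖anticonformalCoeff F‖ := by
  rw [hφ F hF, lambdaMax_sub_one_div_eq_norm hF]

theorem HasProfile.apply_shear (hφ : HasProfile W φ) (γ : ℝ) : W !![1, γ; 0, 1] = φ |γ| := by
  rw [hφ.apply_eq (det_shear γ)]
  simp [anticonformalCoeff, Complex.norm_eq_sqrt_sq_add_sq, Real.sqrt_sq_eq_abs]

theorem RankOneConvexSL.convexOn_shear (h : RankOneConvexSL W) :
    ConvexOn ℝ univ (fun γ : ℝ => W !![1, γ; 0, 1]) := by
  have hrank := h 1 det_one ![1, 0] ![0, 1] (by simp [trace_fin_two])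
  refine hrank.congr fun γ _ => congrArg W ?_
  ext i j
  fin_cases i <;> fin_cases j <;> simp

theorem PolyconvexSL.convexOn_shear (h : PolyconvexSL W) :
    ConvexOn ℝ univ (fun γ : ℝ => W !![1, γ; 0, 1]) := by
  obtain ⟨P, hP, hPW⟩ := h
  refine hP.convexOn_of_affineMap (AffineMap.lineMap (1, 1) (!![1, 1; 0, 1], 1)) fun γ => ?_
  have hline : AffineMap.lineMap (1, 1) (!![1, 1; 0, 1], 1) γ = (!![1, γ; 0, 1], (1 : ℝ)) := by
    ext i j
    · fin_cases i <;> fin_cases j <;> simp [AffineMap.lineMap_apply_module']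
    · simp [AffineMap.lineMap_apply_module']
  have hPγ := hPW !![1, γ; 0, 1]
  rw [if_pos (det_shear γ), det_shear] at hPγ
  rw [hline, ← hPγ]

theorem HasProfile.rankOneConvexSL (hφ : HasProfile W φ)
    (hm : MonotoneOn φ (Ici 0)) (hc : ConvexOn ℝ (Ici 0) φ) : RankOneConvexSL W := by
  intro F hF ξ η h
  have hline : ∀ t : ℝ, W (F + t • vecMulVec ξ η) =
      φ ‖anticonformalCoeff F + t • anticonformalCoeff (vecMulVec ξ η)‖ := fun t => by
    rw [hφ.apply_eq, map_add, map_smul]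
    rw [det_add_smul_vecMulVec_of_trace_eq_zero (by simp [hF]) h, hF]
  simp only [hline]
  exact (hm.convexOn_univ_comp_norm hc).comp_add_smul _ _

theorem HasProfile.polyconvexSL (hφ : HasProfile W φ)
    (hm : MonotoneOn φ (Ici 0)) (hc : ConvexOn ℝ (Ici 0) φ) : PolyconvexSL W := by
  have hconv : ConvexOn ℝ {p : Matrix (Fin 2) (Fin 2) ℝ × ℝ | p.2 = 1}
      (fun p => φ ‖anticonformalCoeff p.1‖) :=
    ((hm.convexOn_univ_comp_norm hc).comp_linearMap
      (anticonformalCoeff ∘ₗ LinearMap.fst ℝ _ _)).subset (subset_univ _)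
      (convex_hyperplane (LinearMap.snd ℝ _ _).isLinear 1)
  refine ⟨extendTop _ _, fun x y a b ha hb hab => hconv.extendTop_le x y ha hb hab, fun F => ?_⟩
  by_cases hF : F.det = 1
  · simp [extendTop, hF, hφ.apply_eq hF]
  · simp [extendTop, hF]

end SL2

theorem rankOneConvex_iff_polyconvex_SL2_general
    (W : Matrix (Fin 2) (Fin 2) ℝ → ℝ)
    (φ : ℝ → ℝ)
    (hφ : ∀ F : Matrix (Fin 2) (Fin 2) ℝ, F.det = 1 →
      W F = φ (lambdaMax F - 1 / lambdaMax F)) :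
    (RankOneConvexSL W ↔ PolyconvexSL W) ∧
    (PolyconvexSL W ↔ ConvexOn ℝ Set.univ (fun γ : ℝ => W !![1, γ; 0, 1])) ∧
    (ConvexOn ℝ Set.univ (fun γ : ℝ => W !![1, γ; 0, 1]) ↔
      MonotoneOn φ (Set.Ici 0) ∧ ConvexOn ℝ (Set.Ici 0) φ) := by
  have hshear : ConvexOn ℝ univ (fun γ : ℝ => W !![1, γ; 0, 1]) ↔
      MonotoneOn φ (Ici 0) ∧ ConvexOn ℝ (Ici 0) φ := by
    rw [funext (HasProfile.apply_shear hφ), convexOn_univ_comp_abs_iff]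
  have hrank : MonotoneOn φ (Ici 0) ∧ ConvexOn ℝ (Ici 0) φ → RankOneConvexSL W :=
    fun ⟨hm, hc⟩ => HasProfile.rankOneConvexSL hφ hm hc
  have hpoly : MonotoneOn φ (Ici 0) ∧ ConvexOn ℝ (Ici 0) φ → PolyconvexSL W :=
    fun ⟨hm, hc⟩ => HasProfile.polyconvexSL hφ hm hc
  refine ⟨⟨fun h => hpoly (hshear.1 h.convexOn_shear), fun h => hrank (hshear.1 h.convexOn_shear)⟩,
    ⟨PolyconvexSL.convexOn_shear, fun h => hpoly (hshear.1 h)⟩, hshear⟩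

/-- **Theorem, main result.** For objective and isotropic
`W : SL(2) → ℝ` with representing function `φ`, the following are equivalent:
(i) `W` is rank-one convex; (ii) `W` is polyconvex; (iii) `γ ↦ W(K(γ))` is
convex on `ℝ`; (iv) `φ` is nondecreasing and convex on `[0,∞)`. -/
theorem rankOneConvex_iff_polyconvex_SL2
    (W : Matrix (Fin 2) (Fin 2) ℝ → ℝ)
    (hW : ∀ F : Matrix (Fin 2) (Fin 2) ℝ, F.det = 1 →
      ∀ Q₁ Q₂ : Matrix (Fin 2) (Fin 2) ℝ, Q₁ᵀ * Q₁ = 1 → Q₂ᵀ * Q₂ = 1 →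
        W (Q₁ * F * Q₂) = W F)
    (φ : ℝ → ℝ)
    (hφ : ∀ F : Matrix (Fin 2) (Fin 2) ℝ, F.det = 1 →
      W F = φ (lambdaMax F - 1 / lambdaMax F)) :
    (RankOneConvexSL W ↔ PolyconvexSL W) ∧
    (PolyconvexSL W ↔ ConvexOn ℝ Set.univ (fun γ : ℝ => W !![1, γ; 0, 1])) ∧
    (ConvexOn ℝ Set.univ (fun γ : ℝ => W !![1, γ; 0, 1]) ↔
      MonotoneOn φ (Set.Ici 0) ∧ ConvexOn ℝ (Set.Ici 0) φ) :=
  rankOneConvex_iff_polyconvex_SL2_general W φ hφ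
end

section
/- Let ψ : [2,∞) → ℝ be twice differentiable and define W : SL(2) → ℝ by W(F) = ψ(‖F‖²). Then W is rank-one convex if and only if ψ′(I) ≥ 0 and ψ′(I) + 2(I − 2)·ψ″(I) ≥ 0 for all I ∈ [2,∞). -/
open Matrix

open Set Filter in


lemma aux_deriv_nonneg_of_monotoneOn {f : ℝ → ℝ} {s : Set ℝ} {x D : ℝ}
    (hmono : MonotoneOn f s) (hx : x ∈ s) (hIoi : Set.Ioi x ⊆ s)
    (hD : HasDerivWithinAt f D s x) : 0 ≤ D := by
  have h1 : Tendsto (slope f x) (nhdsWithin x (Set.Ioi x)) (nhds D) :=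
    (hasDerivWithinAt_iff_tendsto_slope.mp hD).mono_left
      (nhdsWithin_mono x (fun y hy => ⟨hIoi hy, hy.ne'⟩))
  refine ge_of_tendsto h1 ?_
  filter_upwards [self_mem_nhdsWithin] with y hy
  rw [slope_def_field]
  have hxy : x < y := hy
  apply div_nonneg
  · have := hmono hx (hIoi hy) hxy.le; linarith
  · linarith

lemma aux_second_deriv_nonneg_of_convex {f f₁ : ℝ → ℝ} {x D : ℝ}
    (hc : ConvexOn ℝ Set.univ f) (hf₁ : ∀ t, HasDerivAt f (f₁ t) t)
    (hD : HasDerivAt f₁ D x) : 0 ≤ D := by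
  have hderiv : deriv f = f₁ := funext fun t => (hf₁ t).deriv
  have hmono : Monotone f₁ := by
    have h := hc.monotoneOn_deriv (fun t _ => (hf₁ t).differentiableAt)
    rw [hderiv] at h
    exact monotoneOn_univ.mp h
  exact aux_deriv_nonneg_of_monotoneOn (hmono.monotoneOn _) (Set.mem_univ x)
    (Set.subset_univ _) hD.hasDerivWithinAt

lemma aux_even_convex_mono {h : ℝ → ℝ} (hc : ConvexOn ℝ Set.univ h)
    (he : ∀ t : ℝ, h (-t) = h t) {s t : ℝ} (hs : 0 ≤ s) (hst : s ≤ t) : h s ≤ h t := by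
  rcases eq_or_lt_of_le (hs.trans hst) with h0 | ht
  · have ht0 : t = 0 := h0.symm
    have hs0 : s = 0 := le_antisymm (hst.trans ht0.le) hs
    rw [hs0, ht0]
  · have key := hc.2 (Set.mem_univ t) (Set.mem_univ (-t))
      (show (0:ℝ) ≤ (t+s)/(2*t) by positivity)
      (show (0:ℝ) ≤ (t-s)/(2*t) by apply div_nonneg <;> linarith)
      (show (t+s)/(2*t) + (t-s)/(2*t) = 1 by field_simp; ring)
    have harg : ((t+s)/(2*t)) • t + ((t-s)/(2*t)) • (-t) = s := by
      simp only [smul_eq_mul]; field_simp; ring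
    rw [harg, he] at key
    calc h s ≤ ((t+s)/(2*t)) • h t + ((t-s)/(2*t)) • h t := key
    _ = h t := by simp only [smul_eq_mul]; field_simp; ring

set_option maxHeartbeats 2000000 in
/-- **Abeyaratne-type criterion.** For `ψ : [2,∞) → ℝ` twice
differentiable (with first and second derivatives `ψ'`, `ψ''` on `[2,∞)`) and
`W(F) = ψ(‖F‖²)` on `SL(2)`, `W` is rank-one convex iff `ψ'(I) ≥ 0` and
`ψ'(I) + 2(I−2)ψ''(I) ≥ 0` for all `I ∈ [2,∞)`. -/
theorem rankOneConvex_iff_derivative_conditions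
    (ψ ψ' ψ'' : ℝ → ℝ)
    (hd1 : ∀ I ∈ Set.Ici (2:ℝ), HasDerivWithinAt ψ (ψ' I) (Set.Ici 2) I)
    (hd2 : ∀ I ∈ Set.Ici (2:ℝ), HasDerivWithinAt ψ' (ψ'' I) (Set.Ici 2) I)
    (W : Matrix (Fin 2) (Fin 2) ℝ → ℝ)
    (hW : ∀ F : Matrix (Fin 2) (Fin 2) ℝ, F.det = 1 → W F = ψ ((Fᵀ * F).trace)) :
    RankOneConvexSL W ↔
      ∀ I ∈ Set.Ici (2:ℝ), 0 ≤ ψ' I ∧ 0 ≤ ψ' I + 2 * (I - 2) * ψ'' I := by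
  constructor
  · intro hROC
    intro I hI
    have hI2 : (2:ℝ) ≤ I := hI
    -- the special configuration F = 1, ξ = e₀, η = e₁
    have hcon : ((vecMulVec ![(1:ℝ),0] ![0,1])ᵀ * ((1:Matrix (Fin 2) (Fin 2) ℝ))⁻¹ᵀ).trace = 0 := by
      simp [Matrix.trace_fin_two, Matrix.vecMulVec_apply, Matrix.mul_apply, Fin.sum_univ_two]
    have hg := hROC 1 Matrix.det_one ![(1:ℝ),0] ![0,1] hcon
    have hfun : (fun t : ℝ => W ((1:Matrix (Fin 2) (Fin 2) ℝ) + t • vecMulVec ![(1:ℝ),0] ![0,1]))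
        = fun t : ℝ => ψ (2 + t^2) := by
      funext t
      have hdet : ((1:Matrix (Fin 2) (Fin 2) ℝ) + t • vecMulVec ![(1:ℝ),0] ![0,1]).det = 1 := by
        simp [Matrix.det_fin_two, Matrix.vecMulVec_apply, Matrix.add_apply, Matrix.one_apply]
      rw [hW _ hdet]
      congr 1
      simp [Matrix.trace_fin_two, Matrix.mul_apply, Fin.sum_univ_two, Matrix.transpose_apply,
        Matrix.add_apply, Matrix.vecMulVec_apply, Matrix.one_apply]
      ring
    rw [hfun] at hg
    -- basic facts about u t = 2 + t²
    have hmem : ∀ t : ℝ, (2 + t^2) ∈ Set.Ici (2:ℝ) := fun t =>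
      Set.mem_Ici.mpr (le_add_of_nonneg_right (sq_nonneg t))
    have hu : ∀ t : ℝ, HasDerivAt (fun s : ℝ => 2 + s^2) (2*t) t := by
      intro t
      have := (hasDerivAt_pow 2 t).const_add (2:ℝ)
      simpa using this
    -- first derivative of h
    have hh : ∀ t : ℝ, HasDerivAt (fun s : ℝ => ψ (2 + s^2)) (2*t * ψ' (2 + t^2)) t := by
      intro t
      have := (hd1 _ (hmem t)).scomp_hasDerivAt t (hu t) hmem
      simpa [Function.comp_def] using this
    have hh1 : ∀ t : ℝ, HasDerivAt (fun s : ℝ => ψ' (2 + s^2)) (2*t * ψ'' (2 + t^2)) t := by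
      intro t
      have := (hd2 _ (hmem t)).scomp_hasDerivAt t (hu t) hmem
      simpa [Function.comp_def] using this
    -- monotonicity of ψ on [2, ∞)
    have heven : ∀ t : ℝ, (fun s : ℝ => ψ (2 + s^2)) (-t) = (fun s : ℝ => ψ (2 + s^2)) t := by
      intro t; simp [neg_sq]
    have hmonoψ : MonotoneOn ψ (Set.Ici 2) := by
      intro x hx y hy hxy
      have hx2 : (0:ℝ) ≤ x - 2 := by simpa using hx
      have hy2 : (0:ℝ) ≤ y - 2 := by simpa using hy
      have e1 : 2 + Real.sqrt (x-2) ^ 2 = x := by rw [Real.sq_sqrt hx2]; ring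
      have e2 : 2 + Real.sqrt (y-2) ^ 2 = y := by rw [Real.sq_sqrt hy2]; ring
      have := aux_even_convex_mono hg heven (Real.sqrt_nonneg (x-2))
        (Real.sqrt_le_sqrt (by linarith : x - 2 ≤ y - 2))
      simpa [e1, e2] using this
    have hcond1 : 0 ≤ ψ' I :=
      aux_deriv_nonneg_of_monotoneOn hmonoψ hI
        (fun y hy => le_trans hI2 (le_of_lt hy)) (hd1 I hI)
    refine ⟨hcond1, ?_⟩
    -- second condition at s₀ = √(I-2)
    set s₀ := Real.sqrt (I - 2) with hs₀def
    have hs₀sq : s₀^2 = I - 2 := Real.sq_sqrt (by linarith)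
    have hIeq : 2 + s₀^2 = I := by rw [hs₀sq]; ring
    have hprod : HasDerivAt (fun t : ℝ => 2*t * ψ' (2 + t^2))
        (2 * ψ' (2 + s₀^2) + 2*s₀ * (2*s₀ * ψ'' (2 + s₀^2))) s₀ := by
      have ha : HasDerivAt (fun t : ℝ => 2*t) 2 s₀ := by
        simpa using (hasDerivAt_id s₀).const_mul (2:ℝ)
      exact ha.mul (hh1 s₀)
    have hD := aux_second_deriv_nonneg_of_convex hg hh hprod
    rw [hIeq] at hD
    have h4 : 2*s₀*(2*s₀*ψ'' I) = 4*(I-2)*ψ'' I := by rw [← hs₀sq]; ring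
    rw [h4] at hD
    linarith
  · intro hcond F hF ξ η hconstr
    set a : ℝ := (ξ 0^2 + ξ 1^2) * (η 0^2 + η 1^2) with ha_def
    set b : ℝ := 2*(F 0 0 * (ξ 0 * η 0) + F 0 1 * (ξ 0 * η 1) + F 1 0 * (ξ 1 * η 0)
        + F 1 1 * (ξ 1 * η 1)) with hb_def
    set c : ℝ := F 0 0^2 + F 0 1^2 + F 1 0^2 + F 1 1^2 with hc_def
    clear_value a b c
    have hdet : F 0 0 * F 1 1 - F 0 1 * F 1 0 = 1 := by
      rw [← Matrix.det_fin_two]; exact hF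
    have hcon : ξ 0 * η 0 * F 1 1 + -(ξ 1 * η 0 * F 0 1) + (-(ξ 0 * η 1 * F 1 0)
        + ξ 1 * η 1 * F 0 0) = 0 := by
      rw [Matrix.inv_def, Matrix.adjugate_fin_two, hF] at hconstr
      simp [Matrix.trace_fin_two, Matrix.mul_apply, Fin.sum_univ_two, Matrix.transpose_apply,
        Matrix.vecMulVec_apply, Matrix.cons_val', Matrix.cons_val_zero, Matrix.cons_val_one,
        Matrix.head_cons, Matrix.vecHead, Matrix.vecTail, Matrix.empty_val'] at hconstr
      linear_combination hconstr
    have hdet_t : ∀ t : ℝ, (F 0 0 + t * (ξ 0 * η 0)) * (F 1 1 + t * (ξ 1 * η 1))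
        - (F 0 1 + t * (ξ 0 * η 1)) * (F 1 0 + t * (ξ 1 * η 0)) = 1 := by
      intro t; linear_combination hdet + t * hcon
    have hq2 : ∀ t : ℝ, 2 ≤ a*t^2 + b*t + c := by
      intro t
      rw [ha_def, hb_def, hc_def]
      nlinarith [hdet_t t, sq_nonneg ((F 0 0 + t * (ξ 0 * η 0)) - (F 1 1 + t * (ξ 1 * η 1))),
        sq_nonneg ((F 0 1 + t * (ξ 0 * η 1)) + (F 1 0 + t * (ξ 1 * η 0)))]
    have hmem : ∀ t : ℝ, (a*t^2 + b*t + c) ∈ Set.Ici (2:ℝ) := fun t => Set.mem_Ici.mpr (hq2 t)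
    have ha : (0:ℝ) ≤ a := by rw [ha_def]; positivity
    have hb2 : b^2 - 4*a*(c-2) ≤ 0 := by
      have h := discrim_le_zero (a := a) (b := b) (c := c - 2)
        (fun x => by nlinarith [hq2 x])
      rwa [discrim] at h
    -- the function equals ψ ∘ q
    have hfun : (fun t : ℝ => W (F + t • vecMulVec ξ η)) = fun t : ℝ => ψ (a*t^2 + b*t + c) := by
      funext t
      have hdet' : (F + t • vecMulVec ξ η).det = 1 := by
        rw [Matrix.det_fin_two]
        simp only [Matrix.add_apply, Matrix.smul_apply, Matrix.vecMulVec_apply, smul_eq_mul]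
        linear_combination hdet + t * hcon
      rw [hW _ hdet']
      congr 1
      rw [ha_def, hb_def, hc_def]
      simp [Matrix.trace_fin_two, Matrix.mul_apply, Fin.sum_univ_two, Matrix.transpose_apply,
        Matrix.add_apply, Matrix.smul_apply, Matrix.vecMulVec_apply, smul_eq_mul]
      ring
    rw [hfun]
    -- derivatives
    have hq' : ∀ t : ℝ, HasDerivAt (fun x : ℝ => a*x^2 + b*x + c) (2*a*t + b) t := by
      intro t
      have h1 : HasDerivAt (fun x : ℝ => x^2) (2*t) t := by simpa using hasDerivAt_pow 2 t
      have h2 : HasDerivAt (fun x : ℝ => a*x^2) (a*(2*t)) t := h1.const_mul a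
      have h3 : HasDerivAt (fun x : ℝ => b*x) (b*1) t := (hasDerivAt_id t).const_mul b
      have h4 := (h2.add h3).add_const c
      have : a*(2*t) + b*1 = 2*a*t + b := by ring
      rwa [this] at h4
    have hg₁ : ∀ t : ℝ, HasDerivAt (fun x : ℝ => ψ (a*x^2 + b*x + c))
        ((2*a*t + b) * ψ' (a*t^2 + b*t + c)) t := by
      intro t
      have := (hd1 _ (hmem t)).scomp_hasDerivAt t (hq' t) hmem
      simpa [Function.comp_def] using this
    have hg₂ : ∀ t : ℝ, HasDerivAt (fun x : ℝ => ψ' (a*x^2 + b*x + c))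
        ((2*a*t + b) * ψ'' (a*t^2 + b*t + c)) t := by
      intro t
      have := (hd2 _ (hmem t)).scomp_hasDerivAt t (hq' t) hmem
      simpa [Function.comp_def] using this
    have hlin : ∀ t : ℝ, HasDerivAt (fun x : ℝ => 2*a*x + b) (2*a) t := by
      intro t
      have h := ((hasDerivAt_id t).const_mul (2*a)).add_const b
      simpa using h
    have hg₁' : ∀ t : ℝ, HasDerivAt (fun x : ℝ => (2*a*x + b) * ψ' (a*x^2 + b*x + c))
        (2*a * ψ' (a*t^2 + b*t + c) + (2*a*t + b) * ((2*a*t + b) * ψ'' (a*t^2 + b*t + c))) t :=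
      fun t => (hlin t).mul (hg₂ t)
    -- convexity via second derivative
    have hdiff : Differentiable ℝ (fun x : ℝ => ψ (a*x^2 + b*x + c)) :=
      fun t => (hg₁ t).differentiableAt
    have hderiv : deriv (fun x : ℝ => ψ (a*x^2 + b*x + c))
        = fun t : ℝ => (2*a*t + b) * ψ' (a*t^2 + b*t + c) :=
      funext fun t => (hg₁ t).deriv
    have hdiff2 : Differentiable ℝ (deriv (fun x : ℝ => ψ (a*x^2 + b*x + c))) := by
      rw [hderiv]; exact fun t => (hg₁' t).differentiableAt
    apply convexOn_univ_of_deriv2_nonneg hdiff hdiff2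
    intro x
    have hit : deriv^[2] (fun x : ℝ => ψ (a*x^2 + b*x + c)) x
        = 2*a * ψ' (a*x^2 + b*x + c) + (2*a*x + b) * ((2*a*x + b) * ψ'' (a*x^2 + b*x + c)) := by
      have e : deriv^[2] (fun x : ℝ => ψ (a*x^2 + b*x + c)) x
          = deriv (deriv (fun x : ℝ => ψ (a*x^2 + b*x + c))) x := rfl
      rw [e, hderiv]
      exact (hg₁' x).deriv
    rw [hit]
    obtain ⟨hP, hPQ⟩ := hcond _ (hmem x)
    rcases le_or_gt 0 (ψ'' (a*x^2 + b*x + c)) with hQ | hQ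
    · nlinarith [mul_nonneg ha hP, mul_nonneg (sq_nonneg (2*a*x + b)) hQ]
    · have h1 := mul_nonneg ha hPQ
      have h2 := mul_nonneg (by linarith : (0:ℝ) ≤ -ψ'' (a*x^2 + b*x + c))
        (by linarith : (0:ℝ) ≤ 4*a*c - b^2 - 8*a)
      nlinarith [h1, h2]
end

section
/- Let W : GL⁺(2) → ℝ be objective, isotropic and isochoric, and let g : (0,∞)×(0,∞) → ℝ and h : (0,∞) → ℝ be the uniquely determined functions with W(F) = g(λ₁, λ₂) = h(λ₁/λ₂) = h(λ₂/λ₁) for all F ∈ GL⁺(2) with singular values λ₁, λ₂. Then the following are equivalent: (i) W is polyconvex on GL⁺(2); (ii) W is rank-one convex on GL⁺(2); (iii) g is separately convex (convex in each argument separately); (iv) h is convex on (0,∞); (v) h is convex and nondecreasing on [1,∞). -/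
open Matrix

/-- `l1`, `l2` are the singular values of the 2×2 matrix `F`: they are
nonnegative and `l1², l2²` are the eigenvalues of `FᵀF`. -/
def IsSingVals (F : Matrix (Fin 2) (Fin 2) ℝ) (l1 l2 : ℝ) : Prop :=
  0 ≤ l1 ∧ 0 ≤ l2 ∧ l1 ^ 2 + l2 ^ 2 = (Fᵀ * F).trace ∧ l1 ^ 2 * l2 ^ 2 = (Fᵀ * F).det

/-- Rank-one convexity on `GL⁺(2)`: convexity along rank-one line segments that
stay inside `GL⁺(2)`. -/
def RankOneConvexGLp (W : Matrix (Fin 2) (Fin 2) ℝ → ℝ) : Prop :=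
  ∀ F : Matrix (Fin 2) (Fin 2) ℝ, 0 < F.det →
    ∀ ξ η : Fin 2 → ℝ,
      (∀ t ∈ Set.Icc (0:ℝ) 1, 0 < (F + t • vecMulVec ξ η).det) →
      ∀ θ ∈ Set.Icc (0:ℝ) 1,
        W (θ • F + (1 - θ) • (F + vecMulVec ξ η)) ≤
          θ * W F + (1 - θ) * W (F + vecMulVec ξ η)

/-- Polyconvexity on `GL⁺(2)` in the sense of Mielke: the extension of `W` by
`+∞` outside `GL⁺(2)` is a convex function of `(F, det F)`. -/
def PolyconvexGLp (W : Matrix (Fin 2) (Fin 2) ℝ → ℝ) : Prop :=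
  ∃ P : Matrix (Fin 2) (Fin 2) ℝ × ℝ → EReal, ConvexEReal P ∧
    ∀ F : Matrix (Fin 2) (Fin 2) ℝ,
      (if 0 < F.det then (W F : EReal) else ⊤) = P (F, F.det)

/-!
Rank-one convexity along diagonal matrices makes `t ↦ g t 1 = h t` convex, and `h` is
invariant under `t ↦ t⁻¹`, so convexity of `h` on `(0,∞)` amounts to convexity and
monotonicity on `[1,∞)` (any `1 ≤ s ≤ t` lies between `t⁻¹` and `t`).

Conversely, writing `F` as `z ↦ α z + β z̄` on `ℂ`, the singular values are `‖α‖ ± ‖β‖`, so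
`λ_max = ‖α‖ + ‖β‖` is convex in `F` and `λ_max / λ_min = λ_max² / det F`. Hence
`W F = h (max (λ_max(F)² / det F) 1)`, and `(F, δ) ↦ λ_max(F)² / δ` is convex on `δ > 0` as the
perspective of a square; composing with the convex nondecreasing `h` on `[1,∞)` exhibits `W` as
polyconvex, while polyconvexity gives rank-one convexity because `det` is affine on rank-one
lines.
-/

open Set

section Convexity

variable {E : Type*} [AddCommGroup E] [Module ℝ E] {s : Set E} {f : E → ℝ}

theorem ConvexOn.comp_of_mapsTo {t : Set ℝ} {φ : ℝ → ℝ} (hφ : ConvexOn ℝ t φ)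
    (hφ' : MonotoneOn φ t) (hf : ConvexOn ℝ s f) (hst : MapsTo f s t) :
    ConvexOn ℝ s (φ ∘ f) := by
  refine ⟨hf.1, fun x hx y hy a b ha hb hab => ?_⟩
  have hxy : a • f x + b • f y ∈ t := hφ.1 (hst hx) (hst hy) ha hb hab
  exact (hφ' (hst (hf.1 hx hy ha hb hab)) hxy (hf.2 hx hy ha hb hab)).trans
    (hφ.2 (hst hx) (hst hy) ha hb hab)

theorem mul_add_mul_sq_div_le {a b u v p q : ℝ} (ha : 0 ≤ a) (hb : 0 ≤ b) (hp : 0 < p)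
    (hq : 0 < q) : (a * u + b * v) ^ 2 / (a * p + b * q) ≤ a * (u ^ 2 / p) + b * (v ^ 2 / q) := by
  rcases (add_nonneg (mul_nonneg ha hp.le) (mul_nonneg hb hq.le)).eq_or_lt with hD | hD
  · rw [← hD, div_zero]; positivity
  rw [mul_div_assoc', mul_div_assoc', div_add_div _ _ hp.ne' hq.ne',
    div_le_div_iff₀ hD (by positivity)]
  nlinarith [mul_nonneg (mul_nonneg ha hb) (sq_nonneg (u * q - v * p))]

theorem ConvexOn.sq_div (hf : ConvexOn ℝ s f) (hf0 : ∀ x ∈ s, 0 ≤ f x) :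
    ConvexOn ℝ (s ×ˢ Ioi 0) (fun p : E × ℝ => f p.1 ^ 2 / p.2) := by
  refine ⟨hf.1.prod (convex_Ioi 0), fun x hx y hy a b ha hb hab => ?_⟩
  have hD : 0 < a * x.2 + b * y.2 := convex_Ioi (0 : ℝ) hx.2 hy.2 ha hb hab
  calc f (a • x.1 + b • y.1) ^ 2 / (a * x.2 + b * y.2)
      ≤ (a * f x.1 + b * f y.1) ^ 2 / (a * x.2 + b * y.2) := by
        gcongr
        · exact hf0 _ (hf.1 hx.1 hy.1 ha hb hab)
        · exact hf.2 hx.1 hy.1 ha hb hab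
    _ ≤ a * (f x.1 ^ 2 / x.2) + b * (f y.1 ^ 2 / y.2) :=
        mul_add_mul_sq_div_le ha hb hx.2 hy.2

end Convexity

section InversionInvariant

variable {φ : ℝ → ℝ}

theorem ConvexOn.comp_div_Ioi (hφ : ConvexOn ℝ (Ioi 0) φ) {c : ℝ} (hc : 0 < c) :
    ConvexOn ℝ (Ioi 0) (fun x => φ (x / c)) := by
  refine ⟨convex_Ioi 0, fun x hx y hy a b ha hb hab => ?_⟩
  simpa only [smul_eq_mul, add_div, mul_div_assoc] using
    hφ.2 (div_pos hx hc) (div_pos hy hc) ha hb hab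

theorem ConvexOn.monotoneOn_Ici_one_of_inv (hφ : ConvexOn ℝ (Ioi 0) φ)
    (hinv : ∀ t, 0 < t → φ t⁻¹ = φ t) : MonotoneOn φ (Ici 1) := by
  intro s hs t ht hst
  have ht0 : 0 < t := one_pos.trans_le ht
  have hmem : s ∈ segment ℝ t⁻¹ t := by
    rw [segment_eq_Icc ((inv_le_one_of_one_le₀ ht).trans ht)]
    exact ⟨(inv_le_one_of_one_le₀ ht).trans hs, hst⟩
  calc φ s ≤ max (φ t⁻¹) (φ t) := hφ.le_on_segment (inv_pos.2 ht0) ht0 hmem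
    _ = φ t := by rw [hinv t ht0, max_self]

theorem ConvexOn.convexOn_Ioi_of_inv (hφ : ConvexOn ℝ (Ici 1) φ) (hφ' : MonotoneOn φ (Ici 1))
    (hinv : ∀ t, 0 < t → φ t⁻¹ = φ t) : ConvexOn ℝ (Ioi 0) φ := by
  have hmax : ConvexOn ℝ (Ioi 0) (fun t : ℝ => max t t⁻¹) :=
    (convexOn_id (convex_Ioi 0)).sup (by simpa using convexOn_zpow (𝕜 := ℝ) (-1))
  have hmaps : MapsTo (fun t : ℝ => max t t⁻¹) (Ioi 0) (Ici 1) := by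
    intro t ht
    rcases le_total 1 t with h1 | h1
    · exact h1.trans (le_max_left _ _)
    · exact (one_le_inv₀ ht |>.2 h1).trans (le_max_right _ _)
  refine (hφ.comp_of_mapsTo hφ' hmax hmaps).congr fun t ht => ?_
  rcases le_total t t⁻¹ with h | h
  · simp [max_eq_right h, hinv t ht]
  · simp [max_eq_left h]

theorem convexOn_Ioi_iff_of_inv (hinv : ∀ t, 0 < t → φ t⁻¹ = φ t) :
    ConvexOn ℝ (Ioi 0) φ ↔ ConvexOn ℝ (Ici 1) φ ∧ MonotoneOn φ (Ici 1) :=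
  ⟨fun hφ => ⟨hφ.subset (Ici_subset_Ioi.2 one_pos) (convex_Ici 1),
      hφ.monotoneOn_Ici_one_of_inv hinv⟩,
    fun h => h.1.convexOn_Ioi_of_inv h.2 hinv⟩

end InversionInvariant

theorem convexEReal_ite_of_convexOn {s : Set (Matrix (Fin 2) (Fin 2) ℝ × ℝ)}
    [DecidablePred (· ∈ s)] {f : Matrix (Fin 2) (Fin 2) ℝ × ℝ → ℝ} (hf : ConvexOn ℝ s f) :
    ConvexEReal (fun p => if p ∈ s then (f p : EReal) else ⊤) := by
  intro x y a b ha₀ hb₀ hab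
  dsimp only
  rcases ha₀.eq_or_lt with rfl | ha
  · obtain rfl : b = 1 := by linarith
    simp
  rcases hb₀.eq_or_lt with rfl | hb
  · obtain rfl : a = 1 := by linarith
    simp
  have mul_ne_bot : ∀ (c : ℝ) p, 0 < c →
      (c : EReal) * (if p ∈ s then (f p : EReal) else ⊤) ≠ ⊥ := by
    intro c p hc
    split_ifs
    · exact EReal.coe_mul c (f p) ▸ EReal.coe_ne_bot _
    · rw [EReal.mul_top_of_pos (EReal.coe_pos.2 hc)]; exact top_ne_bot
  by_cases hx : x ∈ s
  · by_cases hy : y ∈ s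
    · simp only [if_pos hx, if_pos hy, if_pos (hf.1 hx hy ha₀ hb₀ hab)]
      exact_mod_cast hf.2 hx hy ha₀ hb₀ hab
    · rw [if_neg hy, EReal.mul_top_of_pos (EReal.coe_pos.2 hb),
        EReal.add_top_of_ne_bot (mul_ne_bot a x ha)]
      exact le_top
  · rw [if_neg hx, EReal.mul_top_of_pos (EReal.coe_pos.2 ha),
      EReal.top_add_of_ne_bot (mul_ne_bot b y hb)]
    exact le_top

theorem det_smul_add_smul_add_vecMulVec {R : Type*} [CommRing R] (F : Matrix (Fin 2) (Fin 2) R)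
    (ξ η : Fin 2 → R) (θ : R) :
    (θ • F + (1 - θ) • (F + vecMulVec ξ η)).det =
      θ * F.det + (1 - θ) * (F + vecMulVec ξ η).det := by
  simp only [det_fin_two, Matrix.add_apply, Matrix.smul_apply, smul_eq_mul, vecMulVec_apply]
  ring

theorem PolyconvexGLp.rankOneConvexGLp {W : Matrix (Fin 2) (Fin 2) ℝ → ℝ}
    (hW : PolyconvexGLp W) : RankOneConvexGLp W := by
  obtain ⟨P, hP, hPW⟩ := hW
  intro F hF ξ η hseg θ hθ
  set G := F + vecMulVec ξ η
  have hG : 0 < G.det := by simpa using hseg 1 ⟨zero_le_one, le_rfl⟩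
  have hdet := det_smul_add_smul_add_vecMulVec F ξ η θ
  have hθG : 0 < (θ • F + (1 - θ) • G).det :=
    hdet ▸ convex_Ioi (0 : ℝ) hF hG hθ.1 (sub_nonneg.2 hθ.2) (add_sub_cancel _ _)
  have key := hP (F, F.det) (G, G.det) θ (1 - θ) hθ.1 (sub_nonneg.2 hθ.2) (add_sub_cancel _ _)
  rw [Prod.smul_mk, Prod.smul_mk, Prod.mk_add_mk, smul_eq_mul, smul_eq_mul, ← hdet, ← hPW,
    ← hPW, ← hPW, if_pos hF, if_pos hG, if_pos hθG] at key
  exact_mod_cast key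

theorem det_diagonal_fin_two {R : Type*} [CommRing R] (x y : R) :
    (diagonal ![x, y]).det = x * y := by
  simp [det_diagonal, Fin.prod_univ_two]

theorem RankOneConvexGLp.convexOn_diagonal {W : Matrix (Fin 2) (Fin 2) ℝ → ℝ}
    (hW : RankOneConvexGLp W) {c : ℝ} (hc : 0 < c) :
    ConvexOn ℝ (Ioi 0) (fun t => W (diagonal ![t, c])) := by
  refine ⟨convex_Ioi 0, fun x hx y hy a b ha hb hab => ?_⟩
  set R := vecMulVec ![1, 0] ![y - x, 0]
  have hline : ∀ t : ℝ, diagonal ![x, c] + t • R = diagonal ![(1 - t) * x + t * y, c] := by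
    intro t; ext i j; fin_cases i <;> fin_cases j <;> simp [R]
    ring
  have hseg : ∀ t ∈ Icc (0 : ℝ) 1, 0 < (diagonal ![x, c] + t • R).det := fun t ht => by
    rw [hline, det_diagonal_fin_two]
    exact mul_pos (convex_Ioi (0 : ℝ) hx hy (sub_nonneg.2 ht.2) ht.1 (sub_add_cancel 1 t)) hc
  have key := hW _ (det_diagonal_fin_two x c ▸ mul_pos hx hc) _ _ hseg a ⟨ha, by linarith⟩
  obtain rfl : b = 1 - a := by linarith
  have hend : diagonal ![x, c] + R = diagonal ![y, c] := by simpa using hline 1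
  have hcomb : a • diagonal ![x, c] + (1 - a) • (diagonal ![x, c] + R) =
      diagonal ![x, c] + (1 - a) • R := by module
  rw [hcomb, hline, hend, sub_sub_cancel] at key
  exact key

theorem IsSingVals.symm {F : Matrix (Fin 2) (Fin 2) ℝ} {l1 l2 : ℝ} (h : IsSingVals F l1 l2) :
    IsSingVals F l2 l1 := by
  obtain ⟨h1, h2, htr, hdet⟩ := h
  exact ⟨h2, h1, by rw [← htr, add_comm], by rw [← hdet, mul_comm]⟩

theorem isSingVals_diagonal {x y : ℝ} (hx : 0 ≤ x) (hy : 0 ≤ y) :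
    IsSingVals (diagonal ![x, y]) x y := by
  refine ⟨hx, hy, ?_, ?_⟩
  · simp; ring
  · simp [det_diagonal, Fin.prod_univ_two]; ring

/-- `F` acts on `ℂ ≅ ℝ²` as `z ↦ α z + β z̄` with `α = conformalPart F` and
`β = anticonformalPart F`. -/
noncomputable def conformalPart : Matrix (Fin 2) (Fin 2) ℝ →ₗ[ℝ] ℂ where
  toFun F := ⟨(F 0 0 + F 1 1) / 2, (F 1 0 - F 0 1) / 2⟩
  map_add' X Y := by apply Complex.ext <;> simp <;> ring
  map_smul' c X := by apply Complex.ext <;> simp <;> ring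

noncomputable def anticonformalPart : Matrix (Fin 2) (Fin 2) ℝ →ₗ[ℝ] ℂ where
  toFun F := ⟨(F 0 0 - F 1 1) / 2, (F 1 0 + F 0 1) / 2⟩
  map_add' X Y := by apply Complex.ext <;> simp <;> ring
  map_smul' c X := by apply Complex.ext <;> simp <;> ring

noncomputable def maxSingularValue (F : Matrix (Fin 2) (Fin 2) ℝ) : ℝ :=
  ‖conformalPart F‖ + ‖anticonformalPart F‖

noncomputable def minSingularValue (F : Matrix (Fin 2) (Fin 2) ℝ) : ℝ :=
  ‖conformalPart F‖ - ‖anticonformalPart F‖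

theorem sq_norm_conformalPart (F : Matrix (Fin 2) (Fin 2) ℝ) :
    ‖conformalPart F‖ ^ 2 = ((Fᵀ * F).trace + 2 * F.det) / 4 := by
  simp [Complex.sq_norm, Complex.normSq_apply, conformalPart, trace_fin_two, det_fin_two,
    mul_apply, Fin.sum_univ_two]
  ring

theorem sq_norm_anticonformalPart (F : Matrix (Fin 2) (Fin 2) ℝ) :
    ‖anticonformalPart F‖ ^ 2 = ((Fᵀ * F).trace - 2 * F.det) / 4 := by
  simp [Complex.sq_norm, Complex.normSq_apply, anticonformalPart, trace_fin_two, det_fin_two,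
    mul_apply, Fin.sum_univ_two]
  ring

theorem maxSingularValue_mul_minSingularValue (F : Matrix (Fin 2) (Fin 2) ℝ) :
    maxSingularValue F * minSingularValue F = F.det := by
  rw [maxSingularValue, minSingularValue]
  linear_combination sq_norm_conformalPart F - sq_norm_anticonformalPart F

theorem minSingularValue_pos {F : Matrix (Fin 2) (Fin 2) ℝ} (hF : 0 < F.det) :
    0 < minSingularValue F := by
  refine sub_pos.2 (lt_of_pow_lt_pow_left₀ 2 (norm_nonneg _) ?_)
  rw [sq_norm_conformalPart, sq_norm_anticonformalPart]
  linarith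

theorem maxSingularValue_nonneg (F : Matrix (Fin 2) (Fin 2) ℝ) : 0 ≤ maxSingularValue F :=
  add_nonneg (norm_nonneg _) (norm_nonneg _)

theorem minSingularValue_le_maxSingularValue (F : Matrix (Fin 2) (Fin 2) ℝ) :
    minSingularValue F ≤ maxSingularValue F := by
  unfold minSingularValue maxSingularValue
  linarith [norm_nonneg (anticonformalPart F)]

theorem isSingVals_maxSingularValue_minSingularValue {F : Matrix (Fin 2) (Fin 2) ℝ}
    (hF : 0 < F.det) :
    IsSingVals F (maxSingularValue F) (minSingularValue F) := by
  refine ⟨(minSingularValue_pos hF).le.trans (minSingularValue_le_maxSingularValue F),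
    (minSingularValue_pos hF).le, ?_, ?_⟩
  · rw [maxSingularValue, minSingularValue]
    linear_combination 2 * sq_norm_conformalPart F + 2 * sq_norm_anticonformalPart F
  · rw [← mul_pow, maxSingularValue_mul_minSingularValue, det_mul, det_transpose, sq]

theorem convexOn_maxSingularValue : ConvexOn ℝ univ maxSingularValue :=
  ((convexOn_norm convex_univ).comp_linearMap conformalPart).add
    ((convexOn_norm convex_univ).comp_linearMap anticonformalPart)

theorem apply_diagonal_eq_of_forall_isSingVals {W : Matrix (Fin 2) (Fin 2) ℝ → ℝ}
    {φ : ℝ → ℝ → ℝ} (hW : ∀ F : Matrix (Fin 2) (Fin 2) ℝ, 0 < F.det →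
      ∀ l1 l2 : ℝ, 0 < l1 → 0 < l2 → IsSingVals F l1 l2 → W F = φ l1 l2)
    {x y : ℝ} (hx : 0 < x) (hy : 0 < y) :
    W (diagonal ![x, y]) = φ x y ∧ W (diagonal ![x, y]) = φ y x := by
  have hdet : 0 < (diagonal ![x, y]).det := det_diagonal_fin_two x y ▸ mul_pos hx hy
  exact ⟨hW _ hdet x y hx hy (isSingVals_diagonal hx.le hy.le),
    hW _ hdet y x hy hx (isSingVals_diagonal hx.le hy.le).symm⟩

theorem apply_eq_of_forall_isSingVals_div {W : Matrix (Fin 2) (Fin 2) ℝ → ℝ} {φ : ℝ → ℝ}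
    (hW : ∀ F : Matrix (Fin 2) (Fin 2) ℝ, 0 < F.det →
      ∀ l1 l2 : ℝ, 0 < l1 → 0 < l2 → IsSingVals F l1 l2 → W F = φ (l1 / l2))
    {F : Matrix (Fin 2) (Fin 2) ℝ} (hF : 0 < F.det) :
    W F = φ (maxSingularValue F ^ 2 / F.det) := by
  have hσ₂ := minSingularValue_pos hF
  have hσ₁ := hσ₂.trans_le (minSingularValue_le_maxSingularValue F)
  rw [hW F hF _ _ hσ₁ hσ₂ (isSingVals_maxSingularValue_minSingularValue hF),
    ← maxSingularValue_mul_minSingularValue, sq, mul_div_mul_left _ _ hσ₁.ne']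

theorem polyconvexGLp_of_eq_comp_maxSingularValue {W : Matrix (Fin 2) (Fin 2) ℝ → ℝ}
    {φ : ℝ → ℝ} (hφ : ConvexOn ℝ (Ici 1) φ) (hφ' : MonotoneOn φ (Ici 1))
    (hW : ∀ F : Matrix (Fin 2) (Fin 2) ℝ, 0 < F.det →
      W F = φ (maxSingularValue F ^ 2 / F.det)) :
    PolyconvexGLp W := by
  set s : Set (Matrix (Fin 2) (Fin 2) ℝ × ℝ) := univ ×ˢ Ioi 0
  set ψ : Matrix (Fin 2) (Fin 2) ℝ × ℝ → ℝ := fun p => max (maxSingularValue p.1 ^ 2 / p.2) 1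
  have hψ : ConvexOn ℝ s ψ :=
    (convexOn_maxSingularValue.sq_div fun F _ => maxSingularValue_nonneg F).sup
      (convexOn_const 1 (convex_univ.prod (convex_Ioi 0)))
  have hψs : MapsTo ψ s (Ici 1) := fun _ _ => mem_Ici.2 (le_max_right _ _)
  refine ⟨_, convexEReal_ite_of_convexOn (hφ.comp_of_mapsTo hφ' hψ hψs), fun F => ?_⟩
  by_cases hF : 0 < F.det
  · have hσ : F.det ≤ maxSingularValue F ^ 2 := by
      rw [← maxSingularValue_mul_minSingularValue, sq]
      exact mul_le_mul_of_nonneg_left (minSingularValue_le_maxSingularValue F)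
        (maxSingularValue_nonneg F)
    simp [s, ψ, hF, hW F hF, max_eq_left ((one_le_div hF).2 hσ)]
  · simp [s, hF]

theorem isochoric_rankOne_polyconvex_tfae_general
    (W : Matrix (Fin 2) (Fin 2) ℝ → ℝ)
    (g : ℝ → ℝ → ℝ) (h : ℝ → ℝ)
    (hg : ∀ F : Matrix (Fin 2) (Fin 2) ℝ, 0 < F.det →
      ∀ l1 l2 : ℝ, 0 < l1 → 0 < l2 → IsSingVals F l1 l2 → W F = g l1 l2)
    (hh : ∀ F : Matrix (Fin 2) (Fin 2) ℝ, 0 < F.det →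
      ∀ l1 l2 : ℝ, 0 < l1 → 0 < l2 → IsSingVals F l1 l2 → W F = h (l1 / l2)) :
    (PolyconvexGLp W ↔ RankOneConvexGLp W) ∧
    (RankOneConvexGLp W ↔
      ((∀ l2 ∈ Set.Ioi (0:ℝ), ConvexOn ℝ (Set.Ioi 0) (fun l1 => g l1 l2)) ∧
       (∀ l1 ∈ Set.Ioi (0:ℝ), ConvexOn ℝ (Set.Ioi 0) (fun l2 => g l1 l2)))) ∧
    (((∀ l2 ∈ Set.Ioi (0:ℝ), ConvexOn ℝ (Set.Ioi 0) (fun l1 => g l1 l2)) ∧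
      (∀ l1 ∈ Set.Ioi (0:ℝ), ConvexOn ℝ (Set.Ioi 0) (fun l2 => g l1 l2))) ↔
      ConvexOn ℝ (Set.Ioi 0) h) ∧
    (ConvexOn ℝ (Set.Ioi 0) h ↔
      (ConvexOn ℝ (Set.Ici 1) h ∧ MonotoneOn h (Set.Ici 1))) := by
  have hgh : ∀ x y : ℝ, 0 < x → 0 < y → g x y = h (x / y) := fun x y hx hy =>
    (apply_diagonal_eq_of_forall_isSingVals hg hx hy).1.symm.trans
      (apply_diagonal_eq_of_forall_isSingVals hh hx hy).1
  have hinv : ∀ t, 0 < t → h t⁻¹ = h t := fun t ht => by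
    have := apply_diagonal_eq_of_forall_isSingVals hh ht one_pos
    rw [← one_div, ← this.2, this.1, div_one]
  have hgh' : ∀ x y : ℝ, 0 < x → 0 < y → g x y = h (y / x) := fun x y hx hy => by
    rw [hgh x y hx hy, ← inv_div, hinv _ (div_pos hy hx)]
  have tfae : List.TFAE [PolyconvexGLp W, RankOneConvexGLp W,
      (∀ l2 ∈ Set.Ioi (0:ℝ), ConvexOn ℝ (Set.Ioi 0) (fun l1 => g l1 l2)) ∧
        (∀ l1 ∈ Set.Ioi (0:ℝ), ConvexOn ℝ (Set.Ioi 0) (fun l2 => g l1 l2)),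
      ConvexOn ℝ (Set.Ioi 0) h, ConvexOn ℝ (Set.Ici 1) h ∧ MonotoneOn h (Set.Ici 1)] := by
    tfae_have 1 → 2 := PolyconvexGLp.rankOneConvexGLp
    tfae_have 2 → 4 := fun hW => (hW.convexOn_diagonal one_pos).congr fun t ht => by
      simp only [(apply_diagonal_eq_of_forall_isSingVals hh ht one_pos).1, div_one]
    tfae_have 3 → 4 := fun hsep => (hsep.1 1 (mem_Ioi.2 one_pos)).congr fun t ht => by
      simp only [hgh t 1 ht one_pos, div_one]
    tfae_have 4 → 3 := fun hconv =>
      ⟨fun y hy => (hconv.comp_div_Ioi hy).congr fun x hx => (hgh x y hx hy).symm,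
        fun x hx => (hconv.comp_div_Ioi hx).congr fun y hy => (hgh' x y hx hy).symm⟩
    tfae_have 4 ↔ 5 := convexOn_Ioi_iff_of_inv hinv
    tfae_have 5 → 1 := fun hv => polyconvexGLp_of_eq_comp_maxSingularValue hv.1 hv.2
      fun F hF => apply_eq_of_forall_isSingVals_div hh hF
    tfae_finish
  exact ⟨tfae.out 0 1, tfae.out 1 2, tfae.out 2 3, tfae.out 3 4⟩

/-- For `W : GL⁺(2) → ℝ` objective, isotropic and isochoric,
with `W(F) = g(λ₁, λ₂) = h(λ₁/λ₂) = h(λ₂/λ₁)` in terms of the singular values,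
the following are equivalent: (i) `W` polyconvex; (ii) `W` rank-one convex;
(iii) `g` separately convex; (iv) `h` convex on `(0,∞)`; (v) `h` convex and
nondecreasing on `[1,∞)`. -/
theorem isochoric_rankOne_polyconvex_tfae
    (W : Matrix (Fin 2) (Fin 2) ℝ → ℝ)
    (hobj : ∀ F : Matrix (Fin 2) (Fin 2) ℝ, 0 < F.det →
      ∀ Q₁ Q₂ : Matrix (Fin 2) (Fin 2) ℝ, Q₁ᵀ * Q₁ = 1 → Q₂ᵀ * Q₂ = 1 →
        W (Q₁ * F * Q₂) = W F)
    (hisoch : ∀ a : ℝ, 0 < a → ∀ F : Matrix (Fin 2) (Fin 2) ℝ, 0 < F.det →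
      W (a • F) = W F)
    (g : ℝ → ℝ → ℝ) (h : ℝ → ℝ)
    (hg : ∀ F : Matrix (Fin 2) (Fin 2) ℝ, 0 < F.det →
      ∀ l1 l2 : ℝ, 0 < l1 → 0 < l2 → IsSingVals F l1 l2 → W F = g l1 l2)
    (hh : ∀ F : Matrix (Fin 2) (Fin 2) ℝ, 0 < F.det →
      ∀ l1 l2 : ℝ, 0 < l1 → 0 < l2 → IsSingVals F l1 l2 → W F = h (l1 / l2))
    (hh' : ∀ F : Matrix (Fin 2) (Fin 2) ℝ, 0 < F.det →
      ∀ l1 l2 : ℝ, 0 < l1 → 0 < l2 → IsSingVals F l1 l2 → W F = h (l2 / l1)) :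
    (PolyconvexGLp W ↔ RankOneConvexGLp W) ∧
    (RankOneConvexGLp W ↔
      ((∀ l2 ∈ Set.Ioi (0:ℝ), ConvexOn ℝ (Set.Ioi 0) (fun l1 => g l1 l2)) ∧
       (∀ l1 ∈ Set.Ioi (0:ℝ), ConvexOn ℝ (Set.Ioi 0) (fun l2 => g l1 l2)))) ∧
    (((∀ l2 ∈ Set.Ioi (0:ℝ), ConvexOn ℝ (Set.Ioi 0) (fun l1 => g l1 l2)) ∧
      (∀ l1 ∈ Set.Ioi (0:ℝ), ConvexOn ℝ (Set.Ioi 0) (fun l2 => g l1 l2))) ↔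
      ConvexOn ℝ (Set.Ioi 0) h) ∧
    (ConvexOn ℝ (Set.Ioi 0) h ↔
      (ConvexOn ℝ (Set.Ici 1) h ∧ MonotoneOn h (Set.Ici 1))) :=
  isochoric_rankOne_polyconvex_tfae_general W g h hg hh
end

section
/- Let Wiso : GL⁺(2) → ℝ be objective, isotropic and isochoric, and suppose Wiso is rank-one convex on GL⁺(2). Then the restriction Winc = Wiso|_{SL(2)} is rank-one convex on SL(2) and polyconvex on SL(2). -/
open Matrix

section Auxiliary

set_option linter.unusedTactic false
set_option linter.unreachableTactic false
set_option linter.unnecessarySeqFocus false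

/-- Along a rank-one direction tangent to `SL(2)`, the determinant is constant. -/
lemma aux_detline (F : Matrix (Fin 2) (Fin 2) ℝ) (hF : F.det = 1)
    (ξ η : Fin 2 → ℝ) (ht : ((vecMulVec ξ η)ᵀ * F⁻¹ᵀ).trace = 0) :
    ∀ t : ℝ, (F + t • vecMulVec ξ η).det = 1 := by
  have hinv : F⁻¹ = !![F 1 1, -F 0 1; -F 1 0, F 0 0] := by
    rw [Matrix.inv_def, Matrix.adjugate_fin_two, hF]
    simp
  intro t
  simp [hinv, Matrix.trace_fin_two, Matrix.mul_apply, vecMulVec, Fin.sum_univ_two,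
    Matrix.transpose_apply, Matrix.vecHead, Matrix.vecTail] at ht
  have hF2 : F 0 0 * F 1 1 - F 0 1 * F 1 0 = 1 := by rw [← Matrix.det_fin_two]; exact hF
  simp [Matrix.det_fin_two, Matrix.add_apply, Matrix.smul_apply, vecMulVec, smul_eq_mul]
  linear_combination hF2 + t * ht

/-- Rank-one convexity on `GL⁺(2)` implies rank-one convexity on `SL(2)`. -/
lemma aux_step1 (W : Matrix (Fin 2) (Fin 2) ℝ → ℝ) (hrc : RankOneConvexGLp W) :
    RankOneConvexSL W := by
  intro F hF ξ η htr
  have hdl := aux_detline F hF ξ η htr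
  refine ⟨convex_univ, ?_⟩
  intro t1 _ t2 _ a b ha hb hab
  have hb' : (1 : ℝ) - a = b := by linarith
  have e1 : vecMulVec ξ ((t2 - t1) • η) = (t2 - t1) • vecMulVec ξ η := by
    ext i j; simp [vecMulVec]; ring
  have hdet : ∀ u ∈ Set.Icc (0:ℝ) 1,
      0 < (F + t1 • vecMulVec ξ η + u • vecMulVec ξ ((t2 - t1) • η)).det := by
    intro u _
    rw [e1]
    have e : F + t1 • vecMulVec ξ η + u • (t2 - t1) • vecMulVec ξ η
        = F + (t1 + u * (t2 - t1)) • vecMulVec ξ η := by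
      match_scalars <;> first | ring1 | linear_combination hab
    rw [e, hdl]; norm_num
  have h := hrc (F + t1 • vecMulVec ξ η) (by rw [hdl t1]; norm_num) ξ ((t2 - t1) • η)
    hdet a ⟨ha, by linarith⟩
  rw [e1] at h
  have e2 : a • (F + t1 • vecMulVec ξ η) +
      (1 - a) • (F + t1 • vecMulVec ξ η + (t2 - t1) • vecMulVec ξ η)
      = F + (a • t1 + b • t2) • vecMulVec ξ η := by
    rw [hb']
    simp only [smul_eq_mul]
    match_scalars <;> first | ring1 | linear_combination hab
  have e3 : F + t1 • vecMulVec ξ η + (t2 - t1) • vecMulVec ξ η = F + t2 • vecMulVec ξ η := by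
    match_scalars <;> first | ring1 | linear_combination hab
  rw [e2, e3, hb'] at h
  exact h

/-- Real 2×2 matrices as a pair of complex numbers: `v ↦ z v + w v̄`. -/
noncomputable def auxToM (z w : ℂ) : Matrix (Fin 2) (Fin 2) ℝ :=
  !![z.re + w.re, -z.im + w.im; z.im + w.im, z.re - w.re]

lemma auxToM_mul (z1 w1 z2 w2 : ℂ) :
    auxToM z1 w1 * auxToM z2 w2
      = auxToM (z1*z2 + w1*(starRingEnd ℂ w2)) (z1*w2 + w1*(starRingEnd ℂ z2)) := by
  ext i j
  fin_cases i <;> fin_cases j <;>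
    simp [auxToM, Matrix.mul_apply, Fin.sum_univ_two, Complex.mul_re, Complex.mul_im] <;> ring

lemma auxToM_transpose (z w : ℂ) : (auxToM z w)ᵀ = auxToM (starRingEnd ℂ z) w := by
  ext i j
  fin_cases i <;> fin_cases j <;> simp [auxToM, Matrix.transpose_apply]

lemma auxToM_one : auxToM 1 0 = (1 : Matrix (Fin 2) (Fin 2) ℝ) := by
  ext i j
  fin_cases i <;> fin_cases j <;> simp [auxToM, Matrix.one_apply]

lemma auxToM_orth (z : ℂ) (hz : Complex.normSq z = 1) :
    (auxToM z 0)ᵀ * auxToM z 0 = 1 := by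
  rw [auxToM_transpose, auxToM_mul]
  simp only [mul_zero, zero_mul, map_zero, add_zero, zero_add]
  rw [show (starRingEnd ℂ) z * z = (1:ℂ) by rw [mul_comm, Complex.mul_conj, hz]; norm_num]
  exact auxToM_one

lemma auxDet_toM (z w : ℂ) : (auxToM z w).det = Complex.normSq z - Complex.normSq w := by
  simp [auxToM, Matrix.det_fin_two, Complex.normSq_apply]; ring

lemma aux_eq_toM (F : Matrix (Fin 2) (Fin 2) ℝ) :
    F = auxToM ⟨(F 0 0 + F 1 1)/2, (F 1 0 - F 0 1)/2⟩ ⟨(F 0 0 - F 1 1)/2, (F 0 1 + F 1 0)/2⟩ := by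
  ext i j
  fin_cases i <;> fin_cases j <;> simp [auxToM] <;> ring

/-- The seminorm `F ↦ √((F₀₀-F₁₁)² + (F₀₁+F₁₀)²)` (equal to `√(‖F‖²-2 det F)`). -/
noncomputable def auxUU (F : Matrix (Fin 2) (Fin 2) ℝ) : ℝ :=
  Real.sqrt ((F 0 0 - F 1 1)^2 + (F 0 1 + F 1 0)^2)

lemma auxUU_nonneg (F : Matrix (Fin 2) (Fin 2) ℝ) : 0 ≤ auxUU F := Real.sqrt_nonneg _

lemma aux_conj_eq_inv (u : ℂ) (h : Complex.normSq u = 1) : (starRingEnd ℂ) u = u⁻¹ := by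
  rw [Complex.inv_def, h]
  simp

/-- Representation: on `SL(2)`, an objective-isotropic energy depends only on `auxUU`. -/
lemma aux_rep (Wiso : Matrix (Fin 2) (Fin 2) ℝ → ℝ)
    (hobj : ∀ F : Matrix (Fin 2) (Fin 2) ℝ, 0 < F.det →
      ∀ Q₁ Q₂ : Matrix (Fin 2) (Fin 2) ℝ, Q₁ᵀ * Q₁ = 1 → Q₂ᵀ * Q₂ = 1 →
        Wiso (Q₁ * F * Q₂) = Wiso F)
    (F : Matrix (Fin 2) (Fin 2) ℝ) (hdet : F.det = 1) :
    Wiso F = Wiso !![1, auxUU F; 0, 1] := by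
  set z : ℂ := ⟨(F 0 0 + F 1 1)/2, (F 1 0 - F 0 1)/2⟩ with hz
  set w : ℂ := ⟨(F 0 0 - F 1 1)/2, (F 0 1 + F 1 0)/2⟩ with hw
  have hFz : F = auxToM z w := aux_eq_toM F
  have hdet' : Complex.normSq z - Complex.normSq w = 1 := by
    rw [← auxDet_toM, ← hFz, hdet]
  have huu : auxUU F = 2 * ‖w‖ := by
    have e : (F 0 0 - F 1 1)^2 + (F 0 1 + F 1 0)^2 = 2^2 * (w.re^2 + w.im^2) := by
      rw [hw]; ring
    rw [auxUU, e, Real.sqrt_mul (by positivity), Real.sqrt_sq (by norm_num)]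
    congr 1
    rw [Complex.norm_def, Complex.normSq_apply]
    ring_nf
  set q : ℝ := ‖w‖ with hq
  have hnsw : Complex.normSq w = q^2 := (Complex.sq_norm w).symm
  have hnsz : Complex.normSq z = 1 + q^2 := by rw [← hnsw]; linarith
  by_cases hw0 : w = 0
  · have hq0 : q = 0 := by rw [hq, hw0]; simp
    have hT1 : !![(1:ℝ), auxUU F; 0, 1] = 1 := by
      rw [huu, hq0]
      ext i j; fin_cases i <;> fin_cases j <;> simp [Matrix.one_apply]
    have horthF : Fᵀ * F = 1 := by
      rw [hFz, hw0]
      exact auxToM_orth z (by rw [hnsz, hq0]; ring)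
    have := hobj 1 (by simp) F 1 horthF (by simp)
    simp only [mul_one] at this
    rw [hT1, this]
  · have hq0 : 0 < q := by
      rw [hq]; exact norm_pos_iff.mpr hw0
    set z' : ℂ := ⟨1, -q⟩ with hz'
    set w' : ℂ := ⟨0, q⟩ with hw'
    have hz'ne : z' ≠ 0 := fun h => by simpa [hz'] using congrArg Complex.re h
    have hw'ne : w' ≠ 0 := fun h => by
      have := congrArg Complex.im h
      simp [hw'] at this
      exact absurd this (ne_of_gt hq0)
    have hzne : z ≠ 0 := fun h => by
      rw [h] at hnsz; simp at hnsz; nlinarith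
    have hnsz' : Complex.normSq z' = 1 + q^2 := by simp [hz', Complex.normSq_apply]; ring
    have hnsw' : Complex.normSq w' = q^2 := by simp [hw', Complex.normSq_apply]; ring
    have hT : !![(1:ℝ), auxUU F; 0, 1] = auxToM z' w' := by
      rw [huu]
      ext i j; fin_cases i <;> fin_cases j <;> simp [auxToM, hz', hw'] <;> ring
    set A : ℂ := z / z' with hA
    set B : ℂ := w / w' with hB
    have hAne : A ≠ 0 := div_ne_zero hzne hz'ne
    have hBne : B ≠ 0 := div_ne_zero hw0 hw'ne
    have hnsA : Complex.normSq A = 1 := by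
      rw [hA, map_div₀, hnsz, hnsz']
      field_simp
    have hnsB : Complex.normSq B = 1 := by
      rw [hB, map_div₀, hnsw, hnsw']
      field_simp
    obtain ⟨ζ1, hζ1⟩ : ∃ c : ℂ, c^2 = A * B :=
      ⟨(A*B) ^ ((2:ℂ))⁻¹, Complex.cpow_ofNat_inv_pow _ 2⟩
    have hζ1ne : ζ1 ≠ 0 := by
      intro h; rw [h] at hζ1; simp at hζ1
      rcases hζ1 with h | h
      · exact hAne h
      · exact hBne h
    have hnsζ1 : Complex.normSq ζ1 = 1 := by
      have h2 := congrArg Complex.normSq hζ1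
      rw [map_pow, _root_.map_mul, hnsA, hnsB] at h2
      nlinarith [Complex.normSq_nonneg ζ1]
    set ζ2 : ℂ := A / ζ1 with hζ2
    have hnsζ2 : Complex.normSq ζ2 = 1 := by
      rw [hζ2, map_div₀, hnsA, hnsζ1]; norm_num
    have hζ1' : ζ1^2 * (z' * w') = z * w := by
      rw [hζ1, hA, hB]; field_simp
    have c1 : ζ1 * z' * ζ2 = z := by
      rw [hζ2, hA]; field_simp
    have c2 : ζ1 * w' * (starRingEnd ℂ) ζ2 = w := by
      rw [aux_conj_eq_inv ζ2 hnsζ2, hζ2, hA]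
      rw [div_div]
      rw [inv_div]
      field_simp
      linear_combination hζ1'
    have key : auxToM ζ1 0 * auxToM z' w' * auxToM ζ2 0 = auxToM z w := by
      rw [auxToM_mul, auxToM_mul]
      simp only [mul_zero, zero_mul, map_zero, add_zero, zero_add]
      rw [c1, c2]
    have hWF := hobj (auxToM z' w') (by rw [auxDet_toM, hnsz', hnsw']; norm_num)
      (auxToM ζ1 0) (auxToM ζ2 0) (auxToM_orth ζ1 hnsζ1) (auxToM_orth ζ2 hnsζ2)
    rw [key, ← hFz, ← hT] at hWF
    exact hWF

/-- Subadditivity-type estimate for the Euclidean norm in the plane. -/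
lemma aux_sqrt_comb (x1 y1 x2 y2 a b : ℝ) (ha : 0 ≤ a) (hb : 0 ≤ b) :
    Real.sqrt ((a*x1 + b*x2)^2 + (a*y1 + b*y2)^2)
      ≤ a * Real.sqrt (x1^2 + y1^2) + b * Real.sqrt (x2^2 + y2^2) := by
  have h1 : Real.sqrt (x1^2+y1^2) ^ 2 = x1^2+y1^2 := Real.sq_sqrt (by positivity)
  have h2 : Real.sqrt (x2^2+y2^2) ^ 2 = x2^2+y2^2 := Real.sq_sqrt (by positivity)
  have hCS : x1*x2 + y1*y2 ≤ Real.sqrt (x1^2+y1^2) * Real.sqrt (x2^2+y2^2) := by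
    calc x1*x2 + y1*y2 ≤ |x1*x2 + y1*y2| := le_abs_self _
    _ = Real.sqrt ((x1*x2 + y1*y2)^2) := (Real.sqrt_sq_eq_abs _).symm
    _ ≤ Real.sqrt ((x1^2+y1^2) * (x2^2+y2^2)) := by
        apply Real.sqrt_le_sqrt
        nlinarith [sq_nonneg (x1*y2 - x2*y1)]
    _ = Real.sqrt (x1^2+y1^2) * Real.sqrt (x2^2+y2^2) := Real.sqrt_mul (by positivity) _
  rw [show a * Real.sqrt (x1^2+y1^2) + b * Real.sqrt (x2^2+y2^2)
    = Real.sqrt ((a * Real.sqrt (x1^2+y1^2) + b * Real.sqrt (x2^2+y2^2))^2) from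
      (Real.sqrt_sq (by positivity)).symm]
  apply Real.sqrt_le_sqrt
  set s1 := Real.sqrt (x1^2+y1^2) with hs1def
  set s2 := Real.sqrt (x2^2+y2^2) with hs2def
  have e : (a*s1+b*s2)^2 = a^2*(s1^2) + 2*(a*b)*(s1*s2) + b^2*(s2^2) := by ring
  rw [h1, h2] at e
  have cross : 2*(a*b) * (x1*x2 + y1*y2) ≤ 2*(a*b) * (s1*s2) := by
    apply mul_le_mul_of_nonneg_left hCS (by positivity)
  nlinarith [e, cross]

end Auxiliary

/-- If `Wiso : GL⁺(2) → ℝ` is objective, isotropic, isochoric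
and rank-one convex on `GL⁺(2)`, then its restriction to `SL(2)` is rank-one
convex and polyconvex on `SL(2)`. -/
theorem isochoric_rankOne_implies_SL_rankOne_polyconvex
    (Wiso : Matrix (Fin 2) (Fin 2) ℝ → ℝ)
    (hobj : ∀ F : Matrix (Fin 2) (Fin 2) ℝ, 0 < F.det →
      ∀ Q₁ Q₂ : Matrix (Fin 2) (Fin 2) ℝ, Q₁ᵀ * Q₁ = 1 → Q₂ᵀ * Q₂ = 1 →
        Wiso (Q₁ * F * Q₂) = Wiso F)
    (hisoch : ∀ a : ℝ, 0 < a → ∀ F : Matrix (Fin 2) (Fin 2) ℝ, 0 < F.det →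
      Wiso (a • F) = Wiso F)
    (hrc : RankOneConvexGLp Wiso) :
    RankOneConvexSL Wiso ∧ PolyconvexSL Wiso := by
  have hSL : RankOneConvexSL Wiso := aux_step1 Wiso hrc
  refine ⟨hSL, ?_⟩
  -- the profile function η
  set eta : ℝ → ℝ := fun t => Wiso !![1, t; 0, 1] with heta
  have hmat : ∀ t : ℝ, (1 : Matrix (Fin 2) (Fin 2) ℝ) + t • vecMulVec ![1,0] ![0,1]
      = !![1, t; 0, 1] := by
    intro t; ext i j; fin_cases i <;> fin_cases j <;>
      simp [Matrix.one_apply, vecMulVec, Matrix.add_apply, Matrix.smul_apply]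
  have hconv : ConvexOn ℝ Set.univ eta := by
    have h := hSL 1 (by simp) ![1,0] ![0,1] (by
      simp [Matrix.trace_fin_two, Matrix.mul_apply, vecMulVec, Fin.sum_univ_two,
        Matrix.transpose_apply, Matrix.one_apply])
    have e : (fun t : ℝ => Wiso ((1 : Matrix (Fin 2) (Fin 2) ℝ) + t • vecMulVec ![1,0] ![0,1]))
        = eta := by
      funext t; rw [hmat t]
    rwa [e] at h
  have heven : ∀ t : ℝ, eta (-t) = eta t := by
    intro t
    have hq : (!![(1:ℝ),0;0,-1])ᵀ * !![(1:ℝ),0;0,-1] = 1 := by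
      ext i j; fin_cases i <;> fin_cases j <;>
        simp [Matrix.mul_apply, Fin.sum_univ_two, Matrix.one_apply, Matrix.transpose_apply,
          Matrix.vecHead, Matrix.vecTail]
    have h := hobj !![1, t; 0, 1] (by norm_num [Matrix.det_fin_two_of]) _ _ hq hq
    have e : !![(1:ℝ),0;0,-1] * !![1, t; 0, 1] * !![(1:ℝ),0;0,-1] = !![1, -t; 0, 1] := by
      ext i j; fin_cases i <;> fin_cases j <;> simp [Matrix.mul_apply, Fin.sum_univ_two]
    rw [e] at h
    exact h
  have hmono : ∀ s t : ℝ, 0 ≤ s → s ≤ t → eta s ≤ eta t := by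
    intro s t hs hst
    rcases eq_or_lt_of_le hst with rfl | hlt
    · exact le_refl _
    have ht : 0 < t := lt_of_le_of_lt hs hlt
    set θ := (t+s)/(2*t) with hθdef
    have h0 : 0 ≤ θ := by positivity
    have h1 : θ ≤ 1 := by rw [hθdef, div_le_one (by positivity)]; linarith
    have htne : t ≠ 0 := ne_of_gt ht
    have hcomb := hconv.2 (Set.mem_univ t) (Set.mem_univ (-t)) (show (0:ℝ) ≤ θ from h0)
      (show (0:ℝ) ≤ 1 - θ by linarith) (show θ + (1 - θ) = 1 by ring)
    simp only [smul_eq_mul] at hcomb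
    have harg : θ * t + (1 - θ) * (-t) = s := by
      rw [hθdef]; field_simp; ring
    rw [harg, heven] at hcomb
    have : θ * eta t + (1 - θ) * eta t = eta t := by ring
    linarith
  -- the polyconvex extension
  refine ⟨fun p => if p.2 = 1 then ((eta (auxUU p.1) : ℝ) : EReal) else ⊤, ?_, ?_⟩
  · intro x y a b ha hb hab
    rcases eq_or_lt_of_le ha with rfl | ha'
    · have hb1 : b = 1 := by linarith
      subst hb1
      simp only [zero_smul, one_smul, zero_add, EReal.coe_zero, EReal.coe_one, zero_mul, one_mul]
      exact le_refl _
    rcases eq_or_lt_of_le hb with rfl | hb'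
    · have ha1 : a = 1 := by linarith
      subst ha1
      simp only [zero_smul, one_smul, add_zero, EReal.coe_zero, EReal.coe_one, zero_mul, one_mul]
      exact le_refl _
    by_cases hx : x.2 = 1
    · by_cases hy : y.2 = 1
      · have h2 : (a • x + b • y).2 = 1 := by
          have : (a • x + b • y).2 = a * x.2 + b * y.2 := rfl
          rw [this, hx, hy]; linarith
        dsimp only
        rw [if_pos hx, if_pos hy, if_pos h2]
        have h1 : (a • x + b • y).1 = a • x.1 + b • y.1 := rfl
        rw [h1, ← EReal.coe_mul, ← EReal.coe_mul, ← EReal.coe_add, EReal.coe_le_coe_iff]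
        have hu : auxUU (a • x.1 + b • y.1) ≤ a * auxUU x.1 + b * auxUU y.1 := by
          have e : ((a • x.1 + b • y.1) 0 0 - (a • x.1 + b • y.1) 1 1)^2
              + ((a • x.1 + b • y.1) 0 1 + (a • x.1 + b • y.1) 1 0)^2
              = (a*(x.1 0 0 - x.1 1 1) + b*(y.1 0 0 - y.1 1 1))^2
              + (a*(x.1 0 1 + x.1 1 0) + b*(y.1 0 1 + y.1 1 0))^2 := by
            simp [Matrix.add_apply, Matrix.smul_apply, smul_eq_mul]; ring
          unfold auxUU
          rw [e]
          exact aux_sqrt_comb _ _ _ _ a b ha hb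
        calc eta (auxUU (a • x.1 + b • y.1)) ≤ eta (a * auxUU x.1 + b * auxUU y.1) :=
              hmono _ _ (auxUU_nonneg _) hu
          _ ≤ a * eta (auxUU x.1) + b * eta (auxUU y.1) := by
              have := hconv.2 (Set.mem_univ (auxUU x.1)) (Set.mem_univ (auxUU y.1)) ha hb hab
              simpa [smul_eq_mul] using this
      · dsimp only
        rw [if_neg hy, if_pos hx, EReal.coe_mul_top_of_pos hb']
        rw [EReal.add_top_of_ne_bot (by rw [← EReal.coe_mul]; exact EReal.coe_ne_bot _)]
        exact le_top
    · dsimp only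
      rw [if_neg hx, EReal.coe_mul_top_of_pos ha']
      rw [EReal.top_add_of_ne_bot]
      · exact le_top
      · by_cases hy : y.2 = 1
        · rw [if_pos hy, ← EReal.coe_mul]; exact EReal.coe_ne_bot _
        · rw [if_neg hy, EReal.coe_mul_top_of_pos hb']; exact top_ne_bot
  · intro F
    dsimp only
    by_cases h : F.det = 1
    · rw [if_pos h, if_pos h]
      exact_mod_cast congrArg (fun r : ℝ => (r : EReal)) (aux_rep Wiso hobj F h)
    · rw [if_neg h, if_neg h]
end

section
/- The function Wiso : GL⁺(2) → ℝ defined by Wiso(F) = |√(λ₁/λ₂) − √(λ₂/λ₁)|, where λ₁, λ₂ are the singular values of F, is objective, isotropic and isochoric, but Wiso is NOT rank-one convex on GL⁺(2). -/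
open Matrix

/-- The smallest singular value of a real 2×2 matrix `F`, i.e. the square root of
the smallest eigenvalue of `FᵀF`. -/
noncomputable def lambdaMin (F : Matrix (Fin 2) (Fin 2) ℝ) : ℝ :=
  Real.sqrt (((Fᵀ * F).trace - Real.sqrt ((Fᵀ * F).trace ^ 2 - 4 * (Fᵀ * F).det)) / 2)

/-- The counterexample energy `Wiso(F) = |√(λ₁/λ₂) − √(λ₂/λ₁)|`, written in
terms of the singular values `λ₁ = λmax(F)`, `λ₂ = λmin(F)` of `F` (the
expression is symmetric in the two singular values). -/
noncomputable def Wiso (F : Matrix (Fin 2) (Fin 2) ℝ) : ℝ :=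
  |Real.sqrt (lambdaMax F / lambdaMin F) - Real.sqrt (lambdaMin F / lambdaMax F)|

/-!
`lambdaMax` and `lambdaMin` only see the trace and the determinant of the Gram matrix `FᵀF`,
which are unchanged by `F ↦ Q₁ F Q₂` with `Q₁, Q₂` orthogonal, and both are positively
homogeneous of degree one, so `Wiso`, which only sees their ratio, is objective, isotropic and
isochoric.

Rank-one convexity forces convexity along the rank-one segment `x ↦ diag(x, 1)`, on which
`Wiso` equals `√x - 1/√x`, a strictly concave function; at `x = 1, 4, 9`, for instance, one
has `Wiso(diag(4, 1)) = 3/2 > 5/8 · 0 + 3/8 · 8/3 = 5/8 · Wiso(1) + 3/8 · Wiso(diag(9, 1))`.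
-/

open Set

section Gram

variable {n R : Type*} [Fintype n] [CommRing R]

lemma gram_smul (a : R) (F : Matrix n n R) : (a • F)ᵀ * (a • F) = a ^ 2 • (Fᵀ * F) := by
  rw [transpose_smul, Matrix.smul_mul, Matrix.mul_smul, smul_smul, sq]

variable [DecidableEq n]

lemma gram_orthogonal_mul_mul {Q₁ : Matrix n n R} (h₁ : Q₁ᵀ * Q₁ = 1) (F Q₂ : Matrix n n R) :
    (Q₁ * F * Q₂)ᵀ * (Q₁ * F * Q₂) = Q₂ᵀ * (Fᵀ * F) * Q₂ := by
  simp only [transpose_mul, Matrix.mul_assoc]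
  rw [← Matrix.mul_assoc Q₁ᵀ Q₁, h₁, Matrix.one_mul]

lemma trace_transpose_mul_mul_of_orthogonal {Q : Matrix n n R} (hQ : Qᵀ * Q = 1)
    (G : Matrix n n R) : (Qᵀ * G * Q).trace = G.trace := by
  rw [trace_mul_cycle, mul_eq_one_comm.mp hQ, Matrix.one_mul]

lemma det_transpose_mul_mul_of_orthogonal {Q : Matrix n n R} (hQ : Qᵀ * Q = 1)
    (G : Matrix n n R) : (Qᵀ * G * Q).det = G.det := by
  rw [det_mul, det_mul, mul_right_comm, ← det_mul, hQ, det_one, one_mul]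

end Gram

section SingularValues

variable {Q₁ Q₂ : Matrix (Fin 2) (Fin 2) ℝ}

lemma lambdaMax_orthogonal_mul_mul (h₁ : Q₁ᵀ * Q₁ = 1) (h₂ : Q₂ᵀ * Q₂ = 1)
    (F : Matrix (Fin 2) (Fin 2) ℝ) : lambdaMax (Q₁ * F * Q₂) = lambdaMax F := by
  rw [lambdaMax, lambdaMax, gram_orthogonal_mul_mul h₁,
    trace_transpose_mul_mul_of_orthogonal h₂, det_transpose_mul_mul_of_orthogonal h₂]

lemma lambdaMin_orthogonal_mul_mul (h₁ : Q₁ᵀ * Q₁ = 1) (h₂ : Q₂ᵀ * Q₂ = 1)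
    (F : Matrix (Fin 2) (Fin 2) ℝ) : lambdaMin (Q₁ * F * Q₂) = lambdaMin F := by
  rw [lambdaMin, lambdaMin, gram_orthogonal_mul_mul h₁,
    trace_transpose_mul_mul_of_orthogonal h₂, det_transpose_mul_mul_of_orthogonal h₂]

lemma sqrt_discr_smul (c T D : ℝ) (hc : 0 ≤ c) :
    √((c * T) ^ 2 - 4 * (c ^ 2 * D)) = c * √(T ^ 2 - 4 * D) := by
  rw [show (c * T) ^ 2 - 4 * (c ^ 2 * D) = c ^ 2 * (T ^ 2 - 4 * D) by ring,
    Real.sqrt_mul (by positivity), Real.sqrt_sq hc]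

lemma lambdaMax_smul (a : ℝ) (F : Matrix (Fin 2) (Fin 2) ℝ) :
    lambdaMax (a • F) = |a| * lambdaMax F := by
  rw [lambdaMax, lambdaMax, gram_smul, trace_smul, det_smul, Fintype.card_fin, smul_eq_mul,
    sqrt_discr_smul _ _ _ (sq_nonneg a), ← mul_add, mul_div_assoc,
    Real.sqrt_mul (sq_nonneg a), Real.sqrt_sq_eq_abs]

lemma lambdaMin_smul (a : ℝ) (F : Matrix (Fin 2) (Fin 2) ℝ) :
    lambdaMin (a • F) = |a| * lambdaMin F := by
  rw [lambdaMin, lambdaMin, gram_smul, trace_smul, det_smul, Fintype.card_fin, smul_eq_mul,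
    sqrt_discr_smul _ _ _ (sq_nonneg a), ← mul_sub, mul_div_assoc,
    Real.sqrt_mul (sq_nonneg a), Real.sqrt_sq_eq_abs]

lemma gram_diag (a b : ℝ) :
    (!![a, 0; 0, b] : Matrix (Fin 2) (Fin 2) ℝ)ᵀ * !![a, 0; 0, b] = !![a ^ 2, 0; 0, b ^ 2] := by
  ext i j; fin_cases i <;> fin_cases j <;> simp [mul_apply, sq]

lemma sqrt_discr_gram_diag {a b : ℝ} (hb : 0 ≤ b) (hab : b ≤ a) :
    √((a ^ 2 + b ^ 2) ^ 2 - 4 * (a ^ 2 * b ^ 2 - 0 * 0)) = a ^ 2 - b ^ 2 := by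
  rw [show (a ^ 2 + b ^ 2) ^ 2 - 4 * (a ^ 2 * b ^ 2 - 0 * 0) = (a ^ 2 - b ^ 2) ^ 2 by ring,
    Real.sqrt_sq (by nlinarith)]

lemma lambdaMax_diag {a b : ℝ} (hb : 0 ≤ b) (hab : b ≤ a) : lambdaMax !![a, 0; 0, b] = a := by
  rw [lambdaMax, gram_diag, trace_fin_two_of, det_fin_two_of, sqrt_discr_gram_diag hb hab,
    show (a ^ 2 + b ^ 2 + (a ^ 2 - b ^ 2)) / 2 = a ^ 2 by ring, Real.sqrt_sq (hb.trans hab)]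

lemma lambdaMin_diag {a b : ℝ} (hb : 0 ≤ b) (hab : b ≤ a) : lambdaMin !![a, 0; 0, b] = b := by
  rw [lambdaMin, gram_diag, trace_fin_two_of, det_fin_two_of, sqrt_discr_gram_diag hb hab,
    show (a ^ 2 + b ^ 2 - (a ^ 2 - b ^ 2)) / 2 = b ^ 2 by ring, Real.sqrt_sq hb]

end SingularValues

lemma Wiso_orthogonal_mul_mul {Q₁ Q₂ : Matrix (Fin 2) (Fin 2) ℝ} (h₁ : Q₁ᵀ * Q₁ = 1)
    (h₂ : Q₂ᵀ * Q₂ = 1) (F : Matrix (Fin 2) (Fin 2) ℝ) : Wiso (Q₁ * F * Q₂) = Wiso F := by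
  rw [Wiso, Wiso, lambdaMax_orthogonal_mul_mul h₁ h₂, lambdaMin_orthogonal_mul_mul h₁ h₂]

lemma Wiso_smul {a : ℝ} (ha : a ≠ 0) (F : Matrix (Fin 2) (Fin 2) ℝ) : Wiso (a • F) = Wiso F := by
  have ha' : |a| ≠ 0 := abs_ne_zero.mpr ha
  rw [Wiso, Wiso, lambdaMax_smul, lambdaMin_smul, mul_div_mul_left _ _ ha',
    mul_div_mul_left _ _ ha']

lemma Wiso_diag {a b : ℝ} (hb : 0 < b) (hab : b ≤ a) :
    Wiso !![a, 0; 0, b] = √(a / b) - √(b / a) := by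
  have ha : 0 < a := hb.trans_le hab
  have hle : √(b / a) ≤ √(a / b) :=
    Real.sqrt_le_sqrt (((div_le_one ha).mpr hab).trans ((one_le_div hb).mpr hab))
  rw [Wiso, lambdaMax_diag hb.le hab, lambdaMin_diag hb.le hab, abs_of_nonneg (sub_nonneg.mpr hle)]

lemma Wiso_diag_sq_one {s : ℝ} (hs : 1 ≤ s) : Wiso !![s ^ 2, 0; 0, 1] = s - s⁻¹ := by
  have hs₀ : 0 ≤ s := zero_le_one.trans hs
  rw [Wiso_diag one_pos (one_le_pow₀ hs), div_one, one_div, Real.sqrt_inv, Real.sqrt_sq hs₀]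

lemma not_convexOn_Wiso_diag : ¬ ConvexOn ℝ (Ioi 0) (fun x : ℝ => Wiso !![x, 0; 0, 1]) := by
  intro hconv
  have key := hconv.2 (show (1 : ℝ) ^ 2 ∈ Ioi 0 by norm_num) (show (3 : ℝ) ^ 2 ∈ Ioi 0 by norm_num)
    (show (0 : ℝ) ≤ 5 / 8 by norm_num) (show (0 : ℝ) ≤ 3 / 8 by norm_num) (by norm_num)
  rw [show (5 / 8 : ℝ) • (1 : ℝ) ^ 2 + (3 / 8 : ℝ) • (3 : ℝ) ^ 2 = 2 ^ 2 by norm_num] at key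
  simp only [Wiso_diag_sq_one (s := 1) le_rfl, Wiso_diag_sq_one (s := 2) one_le_two,
    Wiso_diag_sq_one (s := 3) (by norm_num), smul_eq_mul] at key
  norm_num at key

lemma RankOneConvexGLp.convexOn_diag {W : Matrix (Fin 2) (Fin 2) ℝ → ℝ}
    (hW : RankOneConvexGLp W) {b : ℝ} (hb : 0 < b) :
    ConvexOn ℝ (Ioi 0) (fun x : ℝ => W !![x, 0; 0, b]) := by
  refine ⟨convex_Ioi 0, fun x hx y hy θ μ hθ hμ hθμ => ?_⟩
  have segment (t : ℝ) : !![x, 0; 0, b] + t • vecMulVec ![y - x, 0] ![1, 0]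
      = !![x + t * (y - x), 0; 0, b] := by
    ext i j; fin_cases i <;> fin_cases j <;> simp
  have endpoint : !![x, 0; 0, b] + vecMulVec ![y - x, 0] ![1, 0] = !![y, 0; 0, b] := by
    simpa using segment 1
  have hmid : θ • !![x, 0; 0, b] + (1 - θ) • !![y, 0; 0, b]
      = !![θ * x + (1 - θ) * y, 0; 0, b] := by
    ext i j; fin_cases i <;> fin_cases j <;> simp [← add_mul]
  have hdet : ∀ t ∈ Icc (0 : ℝ) 1,
      0 < (!![x, 0; 0, b] + t • vecMulVec ![y - x, 0] ![1, 0]).det := by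
    rintro t ⟨ht₀, ht₁⟩
    rw [segment, det_fin_two_of]
    have hpos := convex_Ioi (0 : ℝ) hx hy (sub_nonneg.mpr ht₁) ht₀ (sub_add_cancel 1 t)
    rw [mem_Ioi, smul_eq_mul, smul_eq_mul] at hpos
    nlinarith
  have key := hW _ (by simpa using mul_pos (mem_Ioi.mp hx) hb) _ _ hdet θ
    ⟨hθ, by linarith⟩
  rw [endpoint, hmid] at key
  obtain rfl : μ = 1 - θ := by linarith
  simpa only [smul_eq_mul] using key

/-- **counterexample.** `Wiso` is objective, isotropic and
isochoric on `GL⁺(2)`, but not rank-one convex on `GL⁺(2)`. -/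
theorem Wiso_objective_isotropic_isochoric_not_rankOneConvex :
    (∀ F : Matrix (Fin 2) (Fin 2) ℝ, 0 < F.det →
      ∀ Q₁ Q₂ : Matrix (Fin 2) (Fin 2) ℝ, Q₁ᵀ * Q₁ = 1 → Q₂ᵀ * Q₂ = 1 →
        Wiso (Q₁ * F * Q₂) = Wiso F) ∧
    (∀ a : ℝ, 0 < a → ∀ F : Matrix (Fin 2) (Fin 2) ℝ, 0 < F.det →
      Wiso (a • F) = Wiso F) ∧
    ¬ RankOneConvexGLp Wiso :=
  ⟨fun F _ _ _ h₁ h₂ => Wiso_orthogonal_mul_mul h₁ h₂ F,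
    fun _ ha F _ => Wiso_smul ha.ne' F,
    fun h => not_convexOn_Wiso_diag (h.convexOn_diag one_pos)⟩
end

section
/- For every F ∈ SL(2) with singular values λ₁, λ₂ one has |√(λ₁/λ₂) − √(λ₂/λ₁)| = λmax(F) − 1/λmax(F), and the function Winc : SL(2) → ℝ defined by Winc(F) = λmax(F) − 1/λmax(F) is polyconvex and rank-one convex on SL(2). -/
open Matrix

/-- Auxiliary: on `SL(2)` the energy equals a convex function of the entries. -/
lemma lambdaMax_sub (G : Matrix (Fin 2) (Fin 2) ℝ) (hG : G.det = 1) :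
    lambdaMax G - 1 / lambdaMax G =
      Real.sqrt ((G 0 0 - G 1 1)^2 + (G 0 1 + G 1 0)^2) := by
  have hdG : G 0 0 * G 1 1 - G 0 1 * G 1 0 = 1 := by rw [← Matrix.det_fin_two]; exact hG
  set T := (Gᵀ * G).trace with hT
  have hTval : T = G 0 0^2 + G 1 0^2 + (G 0 1^2 + G 1 1^2) := by
    simp [hT, Matrix.trace_fin_two, Matrix.mul_apply, Fin.sum_univ_two, Matrix.transpose_apply]
    ring
  have hdet : (Gᵀ * G).det = 1 := by rw [Matrix.det_mul, Matrix.det_transpose, hG, one_mul]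
  have h2 : T - 2 = (G 0 0 - G 1 1)^2 + (G 0 1 + G 1 0)^2 := by
    rw [hTval]; linear_combination (2 : ℝ) * hdG
  have hT2 : 2 ≤ T := by nlinarith [sq_nonneg (G 0 0 - G 1 1), sq_nonneg (G 0 1 + G 1 0)]
  set s := Real.sqrt (T^2 - 4) with hsdef
  have hs2 : s^2 = T^2 - 4 := Real.sq_sqrt (by nlinarith)
  have hs0 : 0 ≤ s := Real.sqrt_nonneg _
  have hsT : s ≤ T := by nlinarith
  set u := (T + s)/2 with hudef
  have hu1 : 1 ≤ u := by rw [hudef]; linarith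
  have hru : (Real.sqrt u)^2 = u := Real.sq_sqrt (by linarith)
  have hru1 : 1 ≤ Real.sqrt u := by nlinarith [Real.sqrt_nonneg u]
  have hrne : Real.sqrt u ≠ 0 := by linarith
  have hLM : lambdaMax G = Real.sqrt u := by
    rw [lambdaMax, ← hT, hdet, hudef, hsdef]; norm_num
  rw [hLM, ← h2]
  have hsq : T - 2 = (Real.sqrt u - 1 / Real.sqrt u)^2 := by
    field_simp
    nlinarith [hru, hs2]
  rw [hsq, Real.sqrt_sq]
  have : 1 / Real.sqrt u ≤ 1 := by
    rw [div_le_one (by linarith)]; linarith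
  linarith

/-- Auxiliary: convexity of `(x,y) ↦ √(x² + y²)`. -/
lemma g_convex (a b : ℝ) (ha : 0 ≤ a) (hb : 0 ≤ b) (x1 y1 x2 y2 : ℝ) :
    Real.sqrt ((a*x1 + b*x2)^2 + (a*y1 + b*y2)^2)
      ≤ a * Real.sqrt (x1^2 + y1^2) + b * Real.sqrt (x2^2 + y2^2) := by
  have norm_eq : ∀ x y : ℝ, ‖(⟨x, y⟩ : ℂ)‖ = Real.sqrt (x^2 + y^2) := by
    intro x y
    rw [Complex.norm_def, Complex.normSq_mk]
    ring_nf
  have h := norm_add_le (a • (⟨x1, y1⟩ : ℂ)) (b • (⟨x2, y2⟩ : ℂ))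
  rw [norm_smul, norm_smul] at h
  simp only [Real.norm_eq_abs, abs_of_nonneg ha, abs_of_nonneg hb] at h
  have e1 : a • (⟨x1, y1⟩ : ℂ) + b • (⟨x2, y2⟩ : ℂ) = (⟨a*x1+b*x2, a*y1+b*y2⟩ : ℂ) := by
    apply Complex.ext <;> simp [Complex.smul_re, Complex.smul_im]
  rw [e1, norm_eq, norm_eq, norm_eq] at h
  exact h

/-- Auxiliary: the tangency condition keeps the determinant equal to one. -/
lemma det_line (F : Matrix (Fin 2) (Fin 2) ℝ) (hF : F.det = 1) (ξ η : Fin 2 → ℝ)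
    (hc : ((vecMulVec ξ η)ᵀ * F⁻¹ᵀ).trace = 0) (t : ℝ) :
    (F + t • vecMulVec ξ η).det = 1 := by
  have hdF : F 0 0 * F 1 1 - F 0 1 * F 1 0 = 1 := by rw [← Matrix.det_fin_two]; exact hF
  have hinv : F⁻¹ = !![F 1 1, -(F 0 1); -(F 1 0), F 0 0] := by
    rw [Matrix.inv_def, hF, Matrix.adjugate_fin_two]
    simp
  have hC : ξ 0 * η 0 * F 1 1 - ξ 0 * η 1 * F 1 0 - ξ 1 * η 0 * F 0 1 + ξ 1 * η 1 * F 0 0 = 0 := by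
    have := hc
    rw [hinv] at this
    simp [Matrix.trace_fin_two, Matrix.mul_apply, Fin.sum_univ_two, Matrix.transpose_apply,
      Matrix.vecMulVec_apply, Matrix.cons_val', Matrix.cons_val_zero, Matrix.cons_val_one,
      Matrix.head_cons, Matrix.empty_val', Matrix.cons_val_fin_one, Matrix.head_fin_const,
      Matrix.vecHead, Matrix.vecTail, Matrix.of_apply] at this
    linarith [this]
  rw [Matrix.det_fin_two]
  simp only [Matrix.add_apply, Matrix.smul_apply, Matrix.vecMulVec_apply, smul_eq_mul]
  linear_combination hdF + t * hC

/-- On `SL(2)`, `|√(λ₁/λ₂) − √(λ₂/λ₁)| = λmax(F) − 1/λmax(F)`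
for the singular values `λ₁, λ₂` of `F`, and the energy
`Winc(F) = λmax(F) − 1/λmax(F)` is polyconvex and rank-one convex on `SL(2)`. -/
theorem Winc_polyconvex_rankOneConvex :
    (∀ F : Matrix (Fin 2) (Fin 2) ℝ, F.det = 1 →
      ∀ l1 l2 : ℝ, 0 < l1 → 0 < l2 → IsSingVals F l1 l2 →
        |Real.sqrt (l1 / l2) - Real.sqrt (l2 / l1)| =
          lambdaMax F - 1 / lambdaMax F) ∧
    PolyconvexSL (fun F => lambdaMax F - 1 / lambdaMax F) ∧
    RankOneConvexSL (fun F => lambdaMax F - 1 / lambdaMax F) := by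
  refine ⟨?_, ?_, ?_⟩
  · -- singular value identity
    intro F hF l1 l2 hl1 hl2 ⟨_, _, hsum, hprod⟩
    have hdF : F 0 0 * F 1 1 - F 0 1 * F 1 0 = 1 := by rw [← Matrix.det_fin_two]; exact hF
    have hdet : (Fᵀ * F).det = 1 := by rw [Matrix.det_mul, Matrix.det_transpose, hF, one_mul]
    have hl : l1 * l2 = 1 := by
      rw [hdet] at hprod
      nlinarith [mul_pos hl1 hl2]
    have hsumE : l1^2 + l2^2 = F 0 0^2 + F 1 0^2 + (F 0 1^2 + F 1 1^2) := by
      rw [hsum]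
      simp [Matrix.trace_fin_two, Matrix.mul_apply, Fin.sum_univ_two, Matrix.transpose_apply]
      ring
    have hd1 : l1 / l2 = l1^2 := by
      field_simp
      linear_combination -hl
    have hd2 : l2 / l1 = l2^2 := by
      field_simp
      linear_combination -hl
    rw [hd1, hd2, Real.sqrt_sq hl1.le, Real.sqrt_sq hl2.le, lambdaMax_sub F hF,
      ← Real.sqrt_sq_eq_abs]
    congr 1
    linear_combination hsumE - 2 * hl + 2 * hdF
  · -- polyconvexity
    refine ⟨fun p => if p.2 = 1 then
        ((Real.sqrt ((p.1 0 0 - p.1 1 1)^2 + (p.1 0 1 + p.1 1 0)^2) : ℝ) : EReal)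
      else ⊤, ?_, ?_⟩
    · intro x y a b ha hb hab
      dsimp only
      have hPnn : ∀ z : Matrix (Fin 2) (Fin 2) ℝ × ℝ, (0 : EReal) ≤
          (if z.2 = 1 then
            ((Real.sqrt ((z.1 0 0 - z.1 1 1)^2 + (z.1 0 1 + z.1 1 0)^2) : ℝ) : EReal)
          else ⊤) := by
        intro z
        split
        · exact_mod_cast Real.sqrt_nonneg _
        · exact le_top
      rcases ha.eq_or_lt with h0 | h0
      · -- a = 0
        have hb1 : b = 1 := by linarith
        subst hb1
        rw [← h0]
        simp [zero_smul, one_smul, zero_add]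
      rcases hb.eq_or_lt with h0' | h0'
      · -- b = 0
        have ha1 : a = 1 := by linarith
        subst ha1
        rw [← h0']
        simp [zero_smul, one_smul, add_zero]
      by_cases hx : x.2 = 1
      · by_cases hy : y.2 = 1
        · -- main case
          have hsnd : (a • x + b • y).2 = 1 := by
            simp only [Prod.snd_add, Prod.smul_snd, smul_eq_mul, hx, hy]
            linarith
          simp only [hsnd, if_pos, hx, hy]
          have hfst : ∀ i j, (a • x + b • y).1 i j = a * x.1 i j + b * y.1 i j := by
            intro i j
            simp [Prod.fst_add, Prod.smul_fst, Matrix.add_apply, Matrix.smul_apply]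
          rw [← EReal.coe_mul, ← EReal.coe_mul, ← EReal.coe_add, EReal.coe_le_coe_iff]
          have e1 : (a • x + b • y).1 0 0 - (a • x + b • y).1 1 1
              = a * (x.1 0 0 - x.1 1 1) + b * (y.1 0 0 - y.1 1 1) := by
            rw [hfst, hfst]; ring
          have e2 : (a • x + b • y).1 0 1 + (a • x + b • y).1 1 0
              = a * (x.1 0 1 + x.1 1 0) + b * (y.1 0 1 + y.1 1 0) := by
            rw [hfst, hfst]; ring
          rw [e1, e2]
          exact g_convex a b ha hb _ _ _ _
        · -- P y = ⊤, b > 0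
          have hw : (0:EReal) ≤ (a : EReal) *
              (if x.2 = 1 then
                ((Real.sqrt ((x.1 0 0 - x.1 1 1)^2 + (x.1 0 1 + x.1 1 0)^2) : ℝ) : EReal)
              else ⊤) :=
            mul_nonneg (by exact_mod_cast ha) (hPnn x)
          rw [if_neg hy, EReal.mul_top_of_pos (by exact_mod_cast h0' : (0:EReal) < (b:EReal)),
            EReal.add_top_of_ne_bot ((lt_of_lt_of_le (by simp) hw).ne')]
          exact le_top
      · -- P x = ⊤, a > 0
        have hw : (0:EReal) ≤ (b : EReal) *
            (if y.2 = 1 then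
              ((Real.sqrt ((y.1 0 0 - y.1 1 1)^2 + (y.1 0 1 + y.1 1 0)^2) : ℝ) : EReal)
            else ⊤) :=
          mul_nonneg (by exact_mod_cast hb) (hPnn y)
        rw [if_neg hx, EReal.mul_top_of_pos (by exact_mod_cast h0 : (0:EReal) < (a:EReal)),
          EReal.top_add_of_ne_bot ((lt_of_lt_of_le (by simp) hw).ne')]
        exact le_top
    · intro F
      by_cases h : F.det = 1
      · simp only [if_pos h]
        rw [lambdaMax_sub F h]
      · simp [h]
  · -- rank-one convexity
    intro F hF ξ η hc
    refine ⟨convex_univ, ?_⟩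
    intro t1 _ t2 _ a b ha hb hab
    simp only [smul_eq_mul]
    have hdet := det_line F hF ξ η hc
    have W_eq : ∀ t : ℝ,
        lambdaMax (F + t • vecMulVec ξ η) - 1 / lambdaMax (F + t • vecMulVec ξ η)
          = Real.sqrt ((F 0 0 + t * (ξ 0 * η 0) - (F 1 1 + t * (ξ 1 * η 1)))^2
              + (F 0 1 + t * (ξ 0 * η 1) + (F 1 0 + t * (ξ 1 * η 0)))^2) := by
      intro t
      rw [lambdaMax_sub _ (hdet t)]
      simp [Matrix.add_apply, Matrix.smul_apply, Matrix.vecMulVec_apply, smul_eq_mul]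
    simp only [W_eq]
    have e1 : F 0 0 + (a*t1+b*t2) * (ξ 0 * η 0) - (F 1 1 + (a*t1+b*t2) * (ξ 1 * η 1))
        = a * (F 0 0 + t1 * (ξ 0 * η 0) - (F 1 1 + t1 * (ξ 1 * η 1)))
          + b * (F 0 0 + t2 * (ξ 0 * η 0) - (F 1 1 + t2 * (ξ 1 * η 1))) := by
      linear_combination (F 1 1 - F 0 0) * hab
    have e2 : F 0 1 + (a*t1+b*t2) * (ξ 0 * η 1) + (F 1 0 + (a*t1+b*t2) * (ξ 1 * η 0))
        = a * (F 0 1 + t1 * (ξ 0 * η 1) + (F 1 0 + t1 * (ξ 1 * η 0)))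
          + b * (F 0 1 + t2 * (ξ 0 * η 1) + (F 1 0 + t2 * (ξ 1 * η 0))) := by
      linear_combination (-(F 0 1) - F 1 0) * hab
    rw [e1, e2]
    exact g_convex a b ha hb _ _ _ _
end
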